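/- arXiv:1805.12416 — 7 statements merged into one kernel-verified Lean document; each statement's English description precedes it below -/
import Mathlib

section
/- Let ε > 0, let f : ℝ → ℝ be continuous, let c, K, u₋, u₊ ∈ ℝ with u₋ ≠ u₊, and let v : ℝ → ℝ be differentiable with ε v'(x)/√(1 + v'(x)²) = c v(x) + f(v(x)) + K for every x ∈ ℝ. If v(x) → u₋ as x → −∞, v(x) → u₊ as x → +∞, and v'(x)/√(1 + v'(x)²) → 0 as x → ±∞, then necessarily c = ( f(u₋) − f(u₊) ) / ( u₊ − u₋ ). -/
open Filter

/-- a traveling front profile `v` of the saturating-diffusion conservation law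
connecting `u₋` at `−∞` with `u₊` at `+∞` forces the speed
`c = (f(u₋) − f(u₊))/(u₊ − u₋)`. -/
theorem admissible_speed
    (ε : ℝ) (hε : 0 < ε) (f : ℝ → ℝ) (hf : Continuous f)
    (c K um up : ℝ) (hne : um ≠ up)
    (v : ℝ → ℝ) (hv : Differentiable ℝ v)
    (heq : ∀ x : ℝ, ε * deriv v x / Real.sqrt (1 + (deriv v x) ^ 2)
      = c * v x + f (v x) + K)
    (hm : Tendsto v atBot (nhds um))
    (hp : Tendsto v atTop (nhds up))
    (hdm : Tendsto (fun x => deriv v x / Real.sqrt (1 + (deriv v x) ^ 2)) atBot (nhds 0))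
    (hdp : Tendsto (fun x => deriv v x / Real.sqrt (1 + (deriv v x) ^ 2)) atTop (nhds 0)) :
    c = (f um - f up) / (up - um) := by
  have key : ∀ (l : Filter ℝ) [l.NeBot] (u : ℝ),
      Tendsto v l (nhds u) →
      Tendsto (fun x => deriv v x / Real.sqrt (1 + (deriv v x) ^ 2)) l (nhds 0) →
      c * u + f u + K = 0 := by
    intro l _ u hu hd
    have h1 : Tendsto (fun x => ε * deriv v x / Real.sqrt (1 + (deriv v x) ^ 2)) l
        (nhds 0) := by
      have := hd.const_mul ε
      simpa [mul_div_assoc] using this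
    have h2 : Tendsto (fun x => c * v x + f (v x) + K) l (nhds (c * u + f u + K)) :=
      (((hu.const_mul c).add ((hf.tendsto u).comp hu)).add tendsto_const_nhds)
    have h3 : Tendsto (fun x => c * v x + f (v x) + K) l (nhds 0) := by
      simpa only [heq] using h1
    exact (tendsto_nhds_unique h2 h3)
  have hm0 := key atBot um hm hdm
  have hp0 := key atTop up hp hdp
  have hsub : c * um - c * up + (f um - f up) = 0 := by linarith
  have hne' : up - um ≠ 0 := sub_ne_zero.mpr (Ne.symm hne)
  field_simp
  ring_nf
  nlinarith [hsub]
end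

section
/- Let ε > 0, u₋ < u₊, and let f : ℝ → ℝ be continuously differentiable on [u₋, u₊]. Set m = min_{[u₋,u₊]} f and M = max_{[u₋,u₊]} f, and assume M − m < ε. Define Φ(C) = ∫_{u₋}^{u₊} √(ε² − (f(u)+C)²) / (f(u)+C) du for C ∈ (−m, ε−M). Then Φ(C) tends to +∞ as C tends to −m from the right. -/
/-!
Let `u₀` be a minimum point of `f`. Since `f` is Lipschitz (with constant `L`) on `[u₋, u₊]`,
`f u + C ≤ L |u - u₀| + δ` with `δ = C + m`, while the numerator `√(ε² - (f u + C)²)` stays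
above a positive constant once `C` is bounded away from `ε - M`. Hence `Φ C` dominates a
multiple of `∫ (L |u - u₀| + δ)⁻¹ du ≥ L⁻¹ log ((L (u₊ - u₋) + δ) / δ)`, which tends to `+∞`
as `δ → 0⁺`.
-/

open Set Filter Topology MeasureTheory Real

theorem ContDiffOn.exists_lipschitzOnWith_Icc {f : ℝ → ℝ} {a b : ℝ} (hab : a < b)
    (hf : ContDiffOn ℝ 1 f (Icc a b)) : ∃ K, LipschitzOnWith K f (Icc a b) := by
  obtain ⟨K, hK⟩ := isCompact_Icc.exists_bound_of_continuousOn
    (hf.continuousOn_derivWithin (uniqueDiffOn_Icc hab) le_rfl)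
  exact ⟨‖K‖₊, (convex_Icc a b).lipschitzOnWith_of_nnnorm_derivWithin_le
    (hf.differentiableOn one_ne_zero) fun x hx => (hK x hx).trans (le_abs_self K)⟩

theorem integral_inv_mul_abs_add {L δ ℓ : ℝ} (hL : 0 < L) (hδ : 0 < δ) (hℓ : 0 ≤ ℓ) :
    ∫ t in (0 : ℝ)..ℓ, (L * |t| + δ)⁻¹ = L⁻¹ * log ((L * ℓ + δ) / δ) := by
  have habs : ∫ t in (0 : ℝ)..ℓ, (L * |t| + δ)⁻¹ = ∫ t in (0 : ℝ)..ℓ, (L * t + δ)⁻¹ :=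
    intervalIntegral.integral_congr fun t ht => by
      rw [uIcc_of_le hℓ] at ht
      rw [abs_of_nonneg ht.1]
  rw [habs, intervalIntegral.integral_comp_mul_add (fun x => x⁻¹) hL.ne',
    integral_inv_of_pos (by simpa using hδ) (by positivity)]
  simp

theorem inv_mul_log_le_integral_inv_mul_abs_sub_add {L δ a b u₀ : ℝ} (hL : 0 < L) (hδ : 0 < δ)
    (hu₀ : u₀ ∈ Icc a b) :
    L⁻¹ * log ((L * (b - a) + δ) / δ) ≤ ∫ u in a..b, (L * |u - u₀| + δ)⁻¹ := by
  have hint : ∀ c d, IntervalIntegrable (fun u => (L * |u - u₀| + δ)⁻¹) volume c d :=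
    fun c d => (Continuous.inv₀ (by fun_prop) fun u => by positivity).intervalIntegrable c d
  have hleft : ∫ u in a..u₀, (L * |u - u₀| + δ)⁻¹ = L⁻¹ * log ((L * (u₀ - a) + δ) / δ) := by
    simp_rw [abs_sub_comm _ u₀]
    rw [intervalIntegral.integral_comp_sub_left (fun t => (L * |t| + δ)⁻¹), sub_self,
      integral_inv_mul_abs_add hL hδ (sub_nonneg.2 hu₀.1)]
  have hright : ∫ u in u₀..b, (L * |u - u₀| + δ)⁻¹ = L⁻¹ * log ((L * (b - u₀) + δ) / δ) := by
    rw [intervalIntegral.integral_comp_sub_right (fun t => (L * |t| + δ)⁻¹), sub_self,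
      integral_inv_mul_abs_add hL hδ (sub_nonneg.2 hu₀.2)]
  have ha : 0 ≤ L * (u₀ - a) := mul_nonneg hL.le (sub_nonneg.2 hu₀.1)
  have hb : 0 ≤ L * (b - u₀) := mul_nonneg hL.le (sub_nonneg.2 hu₀.2)
  rw [← intervalIntegral.integral_add_adjacent_intervals (hint a u₀) (hint u₀ b), hleft, hright,
    ← mul_add, ← log_mul (by positivity) (by positivity), div_mul_div_comm]
  refine mul_le_mul_of_nonneg_left (log_le_log (div_pos (by nlinarith) hδ) ?_) (inv_nonneg.2 hL.le)
  rw [div_le_div_iff₀ hδ (by positivity)]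
  nlinarith [mul_nonneg ha hb]

theorem tendsto_log_add_div_nhdsGT_zero {A : ℝ} (hA : 0 < A) :
    Tendsto (fun δ => log ((A + δ) / δ)) (𝓝[>] 0) atTop := by
  refine tendsto_log_atTop.comp (((tendsto_inv_nhdsGT_zero.const_mul_atTop hA).atTop_add
    (tendsto_const_nhds (x := (1 : ℝ)))).congr' ?_)
  filter_upwards [self_mem_nhdsWithin] with δ hδ
  field_simp [hδ.out.ne']

theorem sqrt_sq_sub_sq_mul_inv_le_div {ε η v K : ℝ} (hv : 0 < v) (hvη : v ≤ η) (hvK : v ≤ K) :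
    √(ε ^ 2 - η ^ 2) * K⁻¹ ≤ √(ε ^ 2 - v ^ 2) / v := by
  rw [← div_eq_mul_inv]
  gcongr

theorem tendsto_add_nhdsGT_zero (a : ℝ) : Tendsto (fun x => x + a) (𝓝[>] (-a)) (𝓝[>] 0) := by
  refine tendsto_nhdsWithin_of_tendsto_nhds_of_eventually_within _
    (((continuous_add_const a).tendsto' (-a) 0 (neg_add_cancel a)).mono_left nhdsWithin_le_nhds) ?_
  filter_upwards [self_mem_nhdsWithin] with x hx
  exact mem_Ioi.2 (by linarith [mem_Ioi.1 hx])

theorem mul_log_le_integral_sqrt_sq_sub_sq_div {g : ℝ → ℝ} {ε η L δ a b u₀ : ℝ} (hab : a ≤ b)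
    (hg : ContinuousOn g (Icc a b)) (hL : 0 < L) (hu₀ : u₀ ∈ Icc a b)
    (hg_pos : ∀ u ∈ Icc a b, 0 < g u) (hgη : ∀ u ∈ Icc a b, g u ≤ η)
    (hgL : ∀ u ∈ Icc a b, g u ≤ L * |u - u₀| + δ) :
    √(ε ^ 2 - η ^ 2) * (L⁻¹ * log ((L * (b - a) + δ) / δ)) ≤
      ∫ u in a..b, √(ε ^ 2 - g u ^ 2) / g u := by
  have hδ : 0 < δ := (hg_pos u₀ hu₀).trans_le (by simpa using hgL u₀ hu₀)
  calc √(ε ^ 2 - η ^ 2) * (L⁻¹ * log ((L * (b - a) + δ) / δ))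
      ≤ √(ε ^ 2 - η ^ 2) * ∫ u in a..b, (L * |u - u₀| + δ)⁻¹ :=
        mul_le_mul_of_nonneg_left (inv_mul_log_le_integral_inv_mul_abs_sub_add hL hδ hu₀)
          (sqrt_nonneg _)
    _ = ∫ u in a..b, √(ε ^ 2 - η ^ 2) * (L * |u - u₀| + δ)⁻¹ :=
        (intervalIntegral.integral_const_mul _ _).symm
    _ ≤ ∫ u in a..b, √(ε ^ 2 - g u ^ 2) / g u := by
        refine intervalIntegral.integral_mono_on hab ?_ ?_ fun u hu =>
          sqrt_sq_sub_sq_mul_inv_le_div (hg_pos u hu) (hgη u hu) (hgL u hu)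
        · exact (continuous_const.mul (Continuous.inv₀ (by fun_prop) fun u => by
            positivity)).intervalIntegrable _ _
        · exact ContinuousOn.intervalIntegrable_of_Icc hab <|
            (continuousOn_const.sub (hg.pow 2)).sqrt.div hg fun u hu => (hg_pos u hu).ne'

theorem Phi_tendsto_atTop_general
    (ε um up : ℝ) (hlt : um < up)
    (f : ℝ → ℝ) (hf : ContDiffOn ℝ 1 f (Set.Icc um up))
    (m M : ℝ)
    (hm : IsLeast (f '' Set.Icc um up) m)
    (hM : IsGreatest (f '' Set.Icc um up) M)
    (hMm : M - m < ε)
    (Φ : ℝ → ℝ)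
    (hΦ : ∀ C : ℝ, Φ C = ∫ u in um..up, Real.sqrt (ε ^ 2 - (f u + C) ^ 2) / (f u + C)) :
    Filter.Tendsto Φ (nhdsWithin (-m) (Set.Ioi (-m))) Filter.atTop := by
  obtain ⟨u₀, hu₀, hfu₀⟩ := hm.1
  obtain ⟨K, hK⟩ := hf.exists_lipschitzOnWith_Icc hlt
  have hL : (0 : ℝ) < K + 1 := by positivity
  have hfL : ∀ u ∈ Icc um up, f u ≤ m + (K + 1) * |u - u₀| := fun u hu => by
    have := hK.dist_le_mul u hu u₀ hu₀
    rw [Real.dist_eq, Real.dist_eq, hfu₀] at this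
    nlinarith [le_abs_self (f u - m), abs_nonneg (u - u₀)]
  obtain ⟨η, hη, hηε⟩ := exists_between hMm
  have hc : 0 < √(ε ^ 2 - η ^ 2) := Real.sqrt_pos.2 (by nlinarith [hm.2 hM.1])
  have htend := (((tendsto_log_add_div_nhdsGT_zero (mul_pos hL (sub_pos.2 hlt))).comp
    (tendsto_add_nhdsGT_zero m)).const_mul_atTop (inv_pos.2 hL)).const_mul_atTop hc
  refine tendsto_atTop_mono' _ ?_ htend
  filter_upwards [Ioc_mem_nhdsGT (show -m < η - M by linarith)] with C hC
  exact hΦ C ▸ mul_log_le_integral_sqrt_sq_sub_sq_div hlt.le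
    (hf.continuousOn.add continuousOn_const) hL hu₀
    (fun u hu => by linarith [hC.1, hm.2 (mem_image_of_mem f hu)])
    (fun u hu => by linarith [hC.2, hM.2 (mem_image_of_mem f hu)])
    (fun u hu => by linarith [hfL u hu])

/-- for `f ∈ C¹([u₋,u₊])`, `Φ(C) → +∞` as `C → (−m)⁺`. -/
theorem Phi_tendsto_atTop
    (ε um up : ℝ) (hε : 0 < ε) (hlt : um < up)
    (f : ℝ → ℝ) (hf : ContDiffOn ℝ 1 f (Set.Icc um up))
    (m M : ℝ)
    (hm : IsLeast (f '' Set.Icc um up) m)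
    (hM : IsGreatest (f '' Set.Icc um up) M)
    (hMm : M - m < ε)
    (Φ : ℝ → ℝ)
    (hΦ : ∀ C : ℝ, Φ C = ∫ u in um..up, Real.sqrt (ε ^ 2 - (f u + C) ^ 2) / (f u + C)) :
    Filter.Tendsto Φ (nhdsWithin (-m) (Set.Ioi (-m))) Filter.atTop :=
  Phi_tendsto_atTop_general ε um up hlt f hf m M hm hM hMm Φ hΦ
end

section
/- Let ε > 0, ℓ > 0, u₋ < u₊, and let f : ℝ → ℝ be continuously differentiable on [u₋, u₊]. Set m = min_{[u₋,u₊]} f and M = max_{[u₋,u₊]} f, and assume M − m < ε. Define Φ(C) = ∫_{u₋}^{u₊} √(ε² − (f(u)+C)²) / (f(u)+C) du for C ∈ (−m, ε−M), and c_I = ∫_{u₋}^{u₊} √( (M − f(u)) (f(u) + 2ε − M) ) / (f(u) + ε − M) du. Then there exists a unique C ∈ (−m, ε−M) with Φ(C) = 2ℓ if and only if 2ℓ > c_I. -/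
/-!
For `0 < t ≤ ε` the map `t ↦ √(ε² - t²) / t` is strictly decreasing, so `Φ` is strictly
decreasing and continuous on `(-m, ε - M]`, and `c_I = Φ (ε - M)`. Since `f` is Lipschitz,
near a minimiser `u₀` we have `f u + C ≤ (C + m) + L |u - u₀|`, and
`∫ (s + L |u - u₀|)⁻¹ du` grows like `log (1 / s)`; hence `Φ C → ∞` as `C ↓ -m`.
The intermediate value theorem and strict monotonicity conclude.
-/

open Set Filter Topology Real
open scoped NNReal

theorem existsUnique_eq_iff_lt_of_strictAntiOn {Φ : ℝ → ℝ} {p q y : ℝ} (hpq : p < q)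
    (hanti : StrictAntiOn Φ (Ioc p q)) (hcont : ContinuousOn Φ (Ioc p q))
    (hlim : Tendsto Φ (𝓝[>] p) atTop) :
    (∃! x, x ∈ Ioo p q ∧ Φ x = y) ↔ Φ q < y := by
  constructor
  · rintro ⟨x, ⟨hx, rfl⟩, -⟩
    exact hanti ⟨hx.1, hx.2.le⟩ ⟨hpq, le_rfl⟩ hx.2
  · intro hy
    obtain ⟨c, hyc, hc⟩ := ((hlim.eventually_gt_atTop y).and (Ioo_mem_nhdsGT hpq)).exists
    obtain ⟨x, hx, rfl⟩ := intermediate_value_Icc' hc.2.le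
      (hcont.mono (Icc_subset_Ioc_iff hc.2.le |>.2 ⟨hc.1, le_rfl⟩)) ⟨hy.le, hyc.le⟩
    have hxq : x ≠ q := by rintro rfl; exact hy.false
    refine ⟨x, ⟨⟨hc.1.trans_le hx.1, hx.2.lt_of_ne hxq⟩, rfl⟩, fun x' hx' => ?_⟩
    exact hanti.injOn ⟨hx'.1.1, hx'.1.2.le⟩ ⟨hc.1.trans_le hx.1, hx.2⟩ hx'.2

theorem continuousOn_parametric_intervalIntegral_of_continuousOn {X E : Type*}
    [TopologicalSpace X] [NormedAddCommGroup E] [NormedSpace ℝ E] {G : X → ℝ → E} {S : Set X}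
    {a b : ℝ}
    (hG : ContinuousOn (Function.uncurry G) (S ×ˢ uIcc a b)) :
    ContinuousOn (fun x => ∫ u in a..b, G x u) S := by
  intro q hq
  rw [Metric.continuousWithinAt_iff']
  intro ε hε
  set δ := ε / (|b - a| + 1)
  have hδ : 0 < δ := by positivity
  have hδε : δ * |b - a| < ε := by
    rw [div_mul_eq_mul_div, div_lt_iff₀ (by positivity)]; nlinarith [abs_nonneg (b - a)]
  have hint : ∀ p ∈ S, IntervalIntegrable (G p) MeasureTheory.volume a b := fun p hp =>
    (hG.comp (continuousOn_const.prodMk continuousOn_id) fun u hu => ⟨hp, hu⟩).intervalIntegrable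
  obtain ⟨v, hv, hvG⟩ :=
    isCompact_uIcc.mem_uniformity_of_prod hG hq (Metric.dist_mem_uniformity hδ)
  filter_upwards [hv, self_mem_nhdsWithin] with p hp hpS
  rw [dist_eq_norm, ← intervalIntegral.integral_sub (hint p hpS) (hint q hq)]
  refine lt_of_le_of_lt (intervalIntegral.norm_integral_le_of_norm_le_const fun u hu => ?_) hδε
  rw [← dist_eq_norm]
  exact (hvG p hp u (uIoc_subset_uIcc hu)).le

theorem strictAntiOn_parametric_intervalIntegral {α : Type*} [Preorder α] {G : α → ℝ → ℝ}
    {S : Set α} {a b : ℝ} (hab : a < b) (hG : ∀ x ∈ S, ContinuousOn (G x) (Icc a b))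
    (hanti : ∀ u ∈ Icc a b, StrictAntiOn (G · u) S) :
    StrictAntiOn (fun x => ∫ u in a..b, G x u) S := fun x hx y hy hxy =>
  intervalIntegral.integral_lt_integral_of_continuousOn_of_le_of_exists_lt hab (hG y hy) (hG x hx)
    (fun u hu => (hanti u (Ioc_subset_Icc_self hu) hx hy hxy).le)
    ⟨a, left_mem_Icc.2 hab.le, hanti a (left_mem_Icc.2 hab.le) hx hy hxy⟩

theorem strictAntiOn_sqrt_sq_sub_sq_div (ε : ℝ) :
    StrictAntiOn (fun t => √(ε ^ 2 - t ^ 2) / t) (Ioc 0 ε) := by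
  intro s hs t ht hst
  have hpos : 0 < √(ε ^ 2 - s ^ 2) := Real.sqrt_pos.2 (by nlinarith [hs.1, ht.2])
  calc √(ε ^ 2 - t ^ 2) / t ≤ √(ε ^ 2 - s ^ 2) / t := by
        gcongr
        · exact ht.1.le
        · nlinarith [hs.1]
    _ < √(ε ^ 2 - s ^ 2) / s := div_lt_div_of_pos_left hpos hs.1 hst

theorem log_le_integral_inv_add {h : ℝ → ℝ} {a b u₀ L s : ℝ} (hab : a ≤ b)
    (hu₀ : u₀ ∈ Icc a b) (hL : 0 < L) (hs : 0 < s) (hcont : ContinuousOn h (Icc a b))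
    (hnonneg : ∀ u ∈ Icc a b, 0 ≤ h u) (hle : ∀ u ∈ Icc a b, h u ≤ L * |u - u₀|) :
    log (1 + L * (b - a) / (2 * s)) / L ≤ ∫ u in a..b, (s + h u)⁻¹ := by
  wlog hleft : u₀ ≤ (a + b) / 2 generalizing h a b u₀
  · have hmaps : MapsTo Neg.neg (Icc (-b) (-a)) (Icc a b) := fun u hu =>
      ⟨by linarith [hu.2], by linarith [hu.1]⟩
    have := this (h := fun u => h (-u)) (u₀ := -u₀) (by linarith)
      ⟨by linarith [hu₀.2], by linarith [hu₀.1]⟩ (hcont.comp continuousOn_neg hmaps)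
      (fun u hu => hnonneg _ (hmaps hu))
      (fun u hu => by
        rw [show u - -u₀ = -(-u - u₀) by ring, abs_neg]; exact hle (-u) (hmaps hu))
      (by linarith)
    rw [intervalIntegral.integral_comp_neg (fun u => (s + h u)⁻¹), neg_neg, neg_neg] at this
    convert this using 4; ring
  set d := (b - a) / 2
  have hd : 0 ≤ d := by simp only [d]; linarith
  have hsub : Icc u₀ (u₀ + d) ⊆ Icc a b := Icc_subset_Icc hu₀.1 (by simp only [d]; linarith)
  have hden : ∀ u ∈ Icc a b, 0 < s + h u := fun u hu => by linarith [hnonneg u hu]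
  have hint : IntervalIntegrable (fun u => (s + h u)⁻¹) MeasureTheory.volume a b :=
    (ContinuousOn.inv₀ (continuousOn_const.add hcont) fun u hu =>
      (hden u hu).ne').intervalIntegrable_of_Icc hab
  calc log (1 + L * (b - a) / (2 * s)) / L = ∫ u in u₀..u₀ + d, (s + L * (u - u₀))⁻¹ := by
        rw [intervalIntegral.integral_comp_sub_right (fun t => (s + L * t)⁻¹), sub_self,
          add_sub_cancel_left, intervalIntegral.integral_comp_add_mul (fun x => x⁻¹) hL.ne',
          mul_zero, add_zero, integral_inv_of_pos hs (by positivity)]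
        rw [smul_eq_mul, inv_mul_eq_div]
        congr 2
        field_simp
        ring
    _ ≤ ∫ u in u₀..u₀ + d, (s + h u)⁻¹ := by
        refine intervalIntegral.integral_mono_on (by linarith) ?_ ?_ fun u hu => ?_
        · exact (ContinuousOn.inv₀ (by fun_prop) fun u hu => by
            nlinarith [hu.1]).intervalIntegrable_of_Icc (by linarith)
        · exact hint.mono_set (by rw [uIcc_of_le hab, uIcc_of_le (by linarith)]; exact hsub)
        · have := hle u (hsub hu)
          rw [abs_of_nonneg (by linarith [hu.1])] at this
          gcongr
          exact hden u (hsub hu)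
    _ ≤ ∫ u in a..b, (s + h u)⁻¹ :=
        intervalIntegral.integral_mono_interval hu₀.1 (by linarith) (by simp only [d]; linarith)
          ((MeasureTheory.ae_restrict_mem measurableSet_Ioc).mono fun u hu =>
            (inv_pos.2 (hden u (Ioc_subset_Icc_self hu))).le) hint

theorem tendsto_integral_inv_add_nhdsGT {f : ℝ → ℝ} {a b u₀ : ℝ} {K : ℝ≥0} (hab : a < b)
    (hf : LipschitzOnWith K f (Icc a b)) (hu₀ : u₀ ∈ Icc a b)
    (hmin : ∀ u ∈ Icc a b, f u₀ ≤ f u) :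
    Tendsto (fun C => ∫ u in a..b, (f u + C)⁻¹) (𝓝[>] (-f u₀)) atTop := by
  set L : ℝ := K + 1
  have hL : 0 < L := by positivity
  have hshift : Tendsto (fun C => C + f u₀) (𝓝[>] (-f u₀)) (𝓝[>] 0) := by
    refine tendsto_nhdsWithin_iff.2 ⟨?_, ?_⟩
    · exact ((continuous_add_const (f u₀)).tendsto' _ _ (neg_add_cancel _)).mono_left
        nhdsWithin_le_nhds
    · filter_upwards [self_mem_nhdsWithin] with C (hC : -f u₀ < C)
      exact neg_lt_iff_pos_add.1 hC
  have hlog : Tendsto (fun s => log (1 + L * (b - a) / (2 * s)) / L) (𝓝[>] 0) atTop := by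
    have hinv := (tendsto_inv_nhdsGT_zero (𝕜 := ℝ)).const_mul_atTop
      (show 0 < L * (b - a) / 2 by nlinarith)
    refine ((tendsto_log_atTop.comp (tendsto_atTop_add_const_left _ 1 hinv)).atTop_div_const
      hL).congr fun s => ?_
    simp only [Function.comp_apply]
    congr 3
    field_simp
  refine tendsto_atTop_mono' _ ?_ (hlog.comp hshift)
  filter_upwards [self_mem_nhdsWithin] with C (hC : -f u₀ < C)
  have hle : ∀ u ∈ Icc a b, f u - f u₀ ≤ L * |u - u₀| := fun u hu =>
    calc f u - f u₀ ≤ dist (f u) (f u₀) := le_abs_self _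
      _ ≤ K * dist u u₀ := hf.dist_le_mul u hu u₀ hu₀
      _ ≤ L * |u - u₀| := by rw [Real.dist_eq]; gcongr; simp [L]
  have := log_le_integral_inv_add (h := fun u => f u - f u₀) hab.le hu₀ hL
    (neg_lt_iff_pos_add.1 hC) (hf.continuousOn.sub continuousOn_const)
    (fun u hu => sub_nonneg.2 (hmin u hu)) hle
  refine this.trans_eq (intervalIntegral.integral_congr fun u _ => ?_)
  ring

section

variable {ε a b m M : ℝ} {f : ℝ → ℝ}

theorem continuousOn_uncurry_sqrt_sq_sub_sq_div_add {s : Set ℝ} (hf : ContinuousOn f s)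
    (hm : ∀ u ∈ s, m ≤ f u) :
    ContinuousOn (Function.uncurry fun C u => √(ε ^ 2 - (f u + C) ^ 2) / (f u + C))
      (Ioi (-m) ×ˢ s) := by
  have hfs : ContinuousOn (fun p : ℝ × ℝ => f p.2 + p.1) (Ioi (-m) ×ˢ s) :=
    (hf.comp continuousOn_snd fun p hp => hp.2).add continuousOn_fst
  refine (continuous_sqrt.comp_continuousOn (continuousOn_const.sub (hfs.pow 2))).div hfs ?_
  rintro ⟨C, u⟩ ⟨hC, hu⟩
  have : -m < C := hC
  exact (show 0 < f u + C by linarith [hm u hu]).ne'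

theorem continuousOn_sqrt_sq_sub_sq_div_add {s : Set ℝ} (hf : ContinuousOn f s)
    (hm : ∀ u ∈ s, m ≤ f u) {C : ℝ} (hC : -m < C) :
    ContinuousOn (fun u => √(ε ^ 2 - (f u + C) ^ 2) / (f u + C)) s :=
  (continuousOn_uncurry_sqrt_sq_sub_sq_div_add (ε := ε) hf hm).comp (f := fun u => (C, u))
    (continuousOn_const.prodMk continuousOn_id)
    fun _ hu => ⟨hC, hu⟩

theorem strictAntiOn_integral_sqrt_sq_sub_sq_div (hab : a < b) (hf : ContinuousOn f (Icc a b))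
    (hm : ∀ u ∈ Icc a b, m ≤ f u) (hM : ∀ u ∈ Icc a b, f u ≤ M) :
    StrictAntiOn (fun C => ∫ u in a..b, √(ε ^ 2 - (f u + C) ^ 2) / (f u + C))
      (Ioc (-m) (ε - M)) :=
  strictAntiOn_parametric_intervalIntegral hab
    (fun _ hC => continuousOn_sqrt_sq_sub_sq_div_add hf hm hC.1) fun u hu =>
    (strictAntiOn_sqrt_sq_sub_sq_div ε).comp_strictMonoOn (fun _ _ _ _ h => by simpa using h)
      fun C hC => ⟨by linarith [hC.1, hm u hu], by linarith [hC.2, hM u hu]⟩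

theorem continuousOn_integral_sqrt_sq_sub_sq_div (hab : a ≤ b) (hf : ContinuousOn f (Icc a b))
    (hm : ∀ u ∈ Icc a b, m ≤ f u) :
    ContinuousOn (fun C => ∫ u in a..b, √(ε ^ 2 - (f u + C) ^ 2) / (f u + C)) (Ioi (-m)) :=
  continuousOn_parametric_intervalIntegral_of_continuousOn <| by
    rw [uIcc_of_le hab]; exact continuousOn_uncurry_sqrt_sq_sub_sq_div_add hf hm

theorem tendsto_integral_sqrt_sq_sub_sq_div_atTop {K : ℝ≥0} {u₀ : ℝ} (hab : a < b)
    (hf : LipschitzOnWith K f (Icc a b)) (hu₀ : u₀ ∈ Icc a b)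
    (hmin : ∀ u ∈ Icc a b, f u₀ ≤ f u) (hM : ∀ u ∈ Icc a b, f u ≤ M) (hMε : M - f u₀ < ε) :
    Tendsto (fun C => ∫ u in a..b, √(ε ^ 2 - (f u + C) ^ 2) / (f u + C)) (𝓝[>] (-f u₀))
      atTop := by
  obtain ⟨C₀, hC₀, hMC₀⟩ : ∃ C₀, -f u₀ < C₀ ∧ M + C₀ < ε :=
    ⟨(ε - M - f u₀) / 2, by linarith, by linarith⟩
  -- for `C < C₀` the numerator is at least `√(ε² - (M + C₀)²)`
  have hκ : 0 < √(ε ^ 2 - (M + C₀) ^ 2) := sqrt_pos.2 (by nlinarith [hM u₀ hu₀])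
  refine tendsto_atTop_mono' _ ?_
    ((tendsto_integral_inv_add_nhdsGT hab hf hu₀ hmin).const_mul_atTop hκ)
  filter_upwards [Ioo_mem_nhdsGT hC₀] with C hC
  have hpos : ∀ u ∈ Icc a b, 0 < f u + C := fun u hu => by linarith [hmin u hu, hC.1]
  rw [← intervalIntegral.integral_const_mul]
  refine intervalIntegral.integral_mono_on hab.le ?_ ?_ fun u hu => ?_
  · exact (continuousOn_const.mul (ContinuousOn.inv₀ (hf.continuousOn.add continuousOn_const)
      fun u hu => (hpos u hu).ne')).intervalIntegrable_of_Icc hab.le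
  · exact (continuousOn_sqrt_sq_sub_sq_div_add hf.continuousOn hmin hC.1).intervalIntegrable_of_Icc
      hab.le
  · rw [← div_eq_mul_inv]
    have hfuC := hpos u hu
    have hfuM := hM u hu
    gcongr
    nlinarith [hC.2]

end

theorem exists_unique_C_iff_general
    (ε ℓ um up : ℝ) (hlt : um < up)
    (f : ℝ → ℝ) (hf : ContDiffOn ℝ 1 f (Set.Icc um up))
    (m M : ℝ)
    (hm : IsLeast (f '' Set.Icc um up) m)
    (hM : IsGreatest (f '' Set.Icc um up) M)
    (hMm : M - m < ε)
    (Φ : ℝ → ℝ)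
    (hΦ : ∀ C : ℝ, Φ C = ∫ u in um..up, Real.sqrt (ε ^ 2 - (f u + C) ^ 2) / (f u + C)) :
    (∃! C : ℝ, C ∈ Set.Ioo (-m) (ε - M) ∧ Φ C = 2 * ℓ) ↔
      2 * ℓ > ∫ u in um..up,
        Real.sqrt ((M - f u) * (f u + 2 * ε - M)) / (f u + ε - M) := by
  obtain ⟨u₀, hu₀, rfl⟩ := hm.1
  have hmin : ∀ u ∈ Icc um up, f u₀ ≤ f u := fun u hu => hm.2 (mem_image_of_mem f hu)
  have hmax : ∀ u ∈ Icc um up, f u ≤ M := fun u hu => hM.2 (mem_image_of_mem f hu)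
  obtain ⟨K, hK⟩ := hf.exists_lipschitzOnWith one_ne_zero (convex_Icc um up) isCompact_Icc
  have hcI :
      (∫ u in um..up, √((M - f u) * (f u + 2 * ε - M)) / (f u + ε - M)) = Φ (ε - M) := by
    rw [hΦ]
    congr 1 with u
    ring_nf
  rw [hcI, funext hΦ]
  exact existsUnique_eq_iff_lt_of_strictAntiOn (by linarith [hmax u₀ hu₀])
    (strictAntiOn_integral_sqrt_sq_sub_sq_div hlt hK.continuousOn hmin hmax)
    ((continuousOn_integral_sqrt_sq_sub_sq_div hlt.le hK.continuousOn hmin).mono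
      Ioc_subset_Ioi_self)
    (tendsto_integral_sqrt_sq_sub_sq_div_atTop hlt hK hu₀ hmin hmax hMm)

/-- there exists a unique `C ∈ (−m, ε−M)` with `Φ(C) = 2ℓ` iff `2ℓ > c_I`. -/
theorem exists_unique_C_iff
    (ε ℓ um up : ℝ) (hε : 0 < ε) (hℓ : 0 < ℓ) (hlt : um < up)
    (f : ℝ → ℝ) (hf : ContDiffOn ℝ 1 f (Set.Icc um up))
    (m M : ℝ)
    (hm : IsLeast (f '' Set.Icc um up) m)
    (hM : IsGreatest (f '' Set.Icc um up) M)
    (hMm : M - m < ε)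
    (Φ : ℝ → ℝ)
    (hΦ : ∀ C : ℝ, Φ C = ∫ u in um..up, Real.sqrt (ε ^ 2 - (f u + C) ^ 2) / (f u + C)) :
    (∃! C : ℝ, C ∈ Set.Ioo (-m) (ε - M) ∧ Φ C = 2 * ℓ) ↔
      2 * ℓ > ∫ u in um..up,
        Real.sqrt ((M - f u) * (f u + 2 * ε - M)) / (f u + ε - M) :=
  exists_unique_C_iff_general ε ℓ um up hlt f hf m M hm hM hMm Φ hΦ
end

section
/- Let ε > 0, ℓ > 0, u₋ < u₊, and let f : ℝ → ℝ be continuously differentiable on [u₋, u₊]. Set m = min_{[u₋,u₊]} f, M = max_{[u₋,u₊]} f, and c_I = ∫_{u₋}^{u₊} √( (M − f(u)) (f(u) + 2ε − M) ) / (f(u) + ε − M) du (defined when M − m < ε). Then the following are equivalent: (i) there exists a strictly increasing, continuously differentiable function u : [−ℓ,ℓ] → ℝ with u(−ℓ) = u₋, u(ℓ) = u₊, and a constant C ∈ ℝ such that ε u'(x)/√(1 + u'(x)²) = f(u(x)) + C for every x ∈ [−ℓ,ℓ]; (ii) M − m < ε and 2ℓ > c_I. Moreover, when (ii) holds, the strictly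 increasing solution u (together with its constant C) is unique. -/
/-- A strictly increasing C¹ stationary solution of the saturating-diffusion
conservation law on `[−ℓ,ℓ]` with boundary values `u(±ℓ) = u∓`, in the
once-integrated form `ε u'/√(1+(u')²) = f(u) + C`. -/
def IsIncreasingSteadyState (ε ℓ um up : ℝ) (f : ℝ → ℝ) (u : ℝ → ℝ) (C : ℝ) : Prop :=
  StrictMonoOn u (Set.Icc (-ℓ) ℓ) ∧ u (-ℓ) = um ∧ u ℓ = up ∧
  ∃ u' : ℝ → ℝ, ContinuousOn u' (Set.Icc (-ℓ) ℓ) ∧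
    (∀ x ∈ Set.Icc (-ℓ) ℓ, HasDerivWithinAt u (u' x) (Set.Icc (-ℓ) ℓ) x) ∧
    (∀ x ∈ Set.Icc (-ℓ) ℓ,
      ε * u' x / Real.sqrt (1 + (u' x) ^ 2) = f (u x) + C)

/-!
Writing `y = f u + C`, the equation `ε u' / √(1 + u'²) = y` forces `|y| < ε` and, solved for
`u'`, gives `dx/du = √(ε² - y²) / y`. Along an increasing solution `0 ≤ f + C < ε` on
`[u₋, u₊]`, and in fact `0 < f + C`: a zero of `f + C` is an equilibrium of the Lipschitz ODE
`u' = (f u + C) / √(ε² - (f u + C)²)`, which `u` cannot cross (Grönwall). Hence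
`x + ℓ = ∫_{u₋}^{u x} dx/du`, the solution is the inverse of this primitive, and `C` is pinned
down by asking the total width `∫_{u₋}^{u₊} dx/du` to be `2ℓ`. The width is strictly decreasing
in `C`, equals `c_I` at the largest admissible value `C = ε - M`, and diverges logarithmically
as `C ↓ -m`, because near a minimum point `s₀` of `f` we have `f + C ≤ K |u - s₀| + (m + C)`.
The intermediate value theorem gives existence, and monotonicity in `C` uniqueness.
-/

open Set Filter Topology Real
open scoped NNReal

/-- `dx/du` along a steady state at a point where the flux `ε u' / √(1 + u'²)` equals `y`. -/
noncomputable def inverseSlope (ε y : ℝ) : ℝ := √(ε ^ 2 - y ^ 2) / y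

/-- The length of the interval on which the increasing steady state with constant `C` rises
from `a` to `b`. -/
noncomputable def steadyWidth (ε C : ℝ) (f : ℝ → ℝ) (a b : ℝ) : ℝ :=
  ∫ s in a..b, inverseSlope ε (f s + C)

section Flux

variable {ε y z : ℝ}

lemma abs_flux_lt (hε : 0 < ε) (t : ℝ) : |ε * t / √(1 + t ^ 2)| < ε := by
  have hs : 0 < √(1 + t ^ 2) := by positivity
  have ht : |t| < √(1 + t ^ 2) := by
    rw [← sqrt_sq_eq_abs]
    exact sqrt_lt_sqrt (sq_nonneg t) (by linarith)
  rw [abs_div, abs_mul, abs_of_pos hε, abs_of_pos hs, div_lt_iff₀ hs]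
  exact mul_lt_mul_of_pos_left ht hε

lemma inv_inverseSlope_flux (hε : 0 < ε) (t : ℝ) :
    (inverseSlope ε (ε * t / √(1 + t ^ 2)))⁻¹ = t := by
  have hs : 0 < √(1 + t ^ 2) := by positivity
  have hsq : ε ^ 2 - (ε * t / √(1 + t ^ 2)) ^ 2 = (ε / √(1 + t ^ 2)) ^ 2 := by
    field_simp
    rw [sq_sqrt (by positivity)]
    ring
  rw [inverseSlope, inv_div, hsq, sqrt_sq (by positivity)]
  field_simp

lemma flux_inv_inverseSlope (hy : y ∈ Ioo 0 ε) :
    ε * (inverseSlope ε y)⁻¹ / √(1 + (inverseSlope ε y)⁻¹ ^ 2) = y := by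
  have hε : 0 < ε := hy.1.trans hy.2
  have hd : 0 < ε ^ 2 - y ^ 2 := by nlinarith [hy.1, hy.2]
  have hs : 0 < √(ε ^ 2 - y ^ 2) := sqrt_pos.2 hd
  have hsq : 1 + (inverseSlope ε y)⁻¹ ^ 2 = (ε / √(ε ^ 2 - y ^ 2)) ^ 2 := by
    rw [inverseSlope, inv_div, div_pow, div_pow, sq_sqrt hd.le]
    field_simp
    ring
  rw [hsq, sqrt_sq (by positivity), inverseSlope, inv_div]
  field_simp

lemma inverseSlope_pos (hy : y ∈ Ioo 0 ε) : 0 < inverseSlope ε y :=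
  div_pos (sqrt_pos.2 (by nlinarith [hy.1, hy.2])) hy.1

lemma strictAntiOn_inverseSlope : StrictAntiOn (inverseSlope ε) (Ioc 0 ε) := by
  intro y hy z hz hyz
  calc inverseSlope ε z ≤ √(ε ^ 2 - y ^ 2) / z := by
        unfold inverseSlope
        gcongr
        · exact hz.1.le
        · nlinarith [hy.1]
    _ < inverseSlope ε y :=
        div_lt_div_of_pos_left (sqrt_pos.2 (by nlinarith [hy.1, hz.2])) hy.1 hyz

lemma continuousOn_inverseSlope : ContinuousOn (inverseSlope ε) (Ioi 0) :=
  ContinuousOn.div (by fun_prop) continuousOn_id fun _ hy => ne_of_gt hy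

lemma inv_inverseSlope_le (h0 : 0 ≤ y) (hyz : y ≤ z) (hz : z < ε) :
    |(inverseSlope ε y)⁻¹| ≤ y / √(ε ^ 2 - z ^ 2) := by
  rw [inverseSlope, inv_div, abs_of_nonneg (by positivity)]
  exact div_le_div_of_nonneg_left h0 (sqrt_pos.2 (by nlinarith))
    (sqrt_le_sqrt (by nlinarith))

lemma div_le_inverseSlope (h0 : 0 < y) (hyz : y ≤ z) :
    √(ε ^ 2 - z ^ 2) / y ≤ inverseSlope ε y := by
  unfold inverseSlope
  gcongr

end Flux

lemma integral_inv_mul_add {K δ L : ℝ} (hK : 0 < K) (hδ : 0 < δ) (hL : 0 ≤ L) :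
    ∫ t in (0 : ℝ)..L, (K * t + δ)⁻¹ = log ((K * L + δ) / δ) / K := by
  rw [intervalIntegral.integral_comp_mul_add (fun x => x⁻¹) hK.ne' δ, mul_zero, zero_add,
    integral_inv_of_pos hδ (by positivity), smul_eq_mul, inv_mul_eq_div]

lemma log_div_le_integral_inv_mul_abs_sub_add {K δ a b s₀ : ℝ} (hK : 0 < K) (hδ : 0 < δ)
    (hs₀ : s₀ ∈ Icc a b) :
    log ((K * (b - a) + δ) / δ) / K ≤ ∫ s in a..b, (K * |s - s₀| + δ)⁻¹ := by
  set F : ℝ → ℝ := fun t => (K * |t| + δ)⁻¹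
  have hF : Continuous F := by
    refine Continuous.inv₀ (by fun_prop) fun t => ?_
    positivity
  have hhalf : ∀ L, 0 ≤ L → ∫ t in (0 : ℝ)..L, F t = log ((K * L + δ) / δ) / K := by
    intro L hL
    rw [← integral_inv_mul_add hK hδ hL]
    refine intervalIntegral.integral_congr fun t ht => ?_
    rw [uIcc_of_le hL] at ht
    simp only [F, abs_of_nonneg ht.1]
  have hleft : ∫ s in a..s₀, F (s - s₀) = log ((K * (s₀ - a) + δ) / δ) / K := by
    simp_rw [F, abs_sub_comm _ s₀]
    rw [intervalIntegral.integral_comp_sub_left (fun t => (K * |t| + δ)⁻¹), sub_self]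
    exact hhalf _ (sub_nonneg.2 hs₀.1)
  have hright : ∫ s in s₀..b, F (s - s₀) = log ((K * (b - s₀) + δ) / δ) / K := by
    rw [intervalIntegral.integral_comp_sub_right F, sub_self]
    exact hhalf _ (sub_nonneg.2 hs₀.2)
  have hint : ∀ c d, IntervalIntegrable (fun s => F (s - s₀)) MeasureTheory.volume c d :=
    fun c d => (hF.comp (continuous_sub_right s₀)).intervalIntegrable c d
  change _ ≤ ∫ s in a..b, F (s - s₀)
  rw [← intervalIntegral.integral_add_adjacent_intervals (hint a s₀) (hint s₀ b), hleft, hright,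
    ← add_div]
  gcongr
  have h1 : 0 ≤ s₀ - a := sub_nonneg.2 hs₀.1
  have h2 : 0 ≤ b - s₀ := sub_nonneg.2 hs₀.2
  have h3 : 0 ≤ b - a := by linarith
  rw [← log_mul (by positivity) (by positivity)]
  refine log_le_log (by positivity) ?_
  rw [div_mul_div_comm, div_le_div_iff₀ hδ (by positivity)]
  nlinarith [mul_nonneg (mul_nonneg hK.le h1) (mul_nonneg hK.le h2)]

lemma strictMonoOn_integral_of_pos {g : ℝ → ℝ} {a b : ℝ} (hg : ContinuousOn g (Icc a b))
    (hpos : ∀ s ∈ Icc a b, 0 < g s) : StrictMonoOn (fun v => ∫ s in a..v, g s) (Icc a b) := by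
  intro v hv w hw hvw
  have hsub : Icc v w ⊆ Icc a b := Icc_subset_Icc hv.1 hw.2
  have hint : ∀ c ∈ Icc a b, IntervalIntegrable g MeasureTheory.volume a c := fun c hc =>
    (hg.mono (uIcc_subset_Icc (left_mem_Icc.2 (hc.1.trans hc.2)) hc)).intervalIntegrable
  rw [← sub_pos, intervalIntegral.integral_interval_sub_left (hint w hw) (hint v hv)]
  exact intervalIntegral.integral_pos hvw (hg.mono hsub)
    (fun s hs => (hpos s (hsub ⟨hs.1.le, hs.2⟩)).le) ⟨v, ⟨le_rfl, hvw.le⟩, hpos v hv⟩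

lemma eq_of_abs_deriv_le_mul_abs_sub_of_eq_left {u u' : ℝ → ℝ} {a b c K : ℝ}
    (hu : ∀ x ∈ Icc a b, HasDerivWithinAt u (u' x) (Icc a b) x)
    (hbound : ∀ x ∈ Icc a b, |u' x| ≤ K * |u x - c|) (hc : u a = c) :
    ∀ x ∈ Icc a b, u x = c := by
  intro x hx
  refine sub_eq_zero.1 (eq_zero_of_abs_deriv_le_mul_abs_self_of_eq_zero_right
    (f := fun x => u x - c) (f' := u')
    (fun x hx => (hu x hx).continuousWithinAt.sub continuousWithinAt_const)
    (fun x hx => ((hu x (Ico_subset_Icc_self hx)).sub_const c).mono_of_mem_nhdsWithin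
      (Icc_mem_nhdsGE_of_mem hx))
    (by simp [hc]) (fun x hx => hbound x (Ico_subset_Icc_self hx)) x hx)

lemma eq_of_abs_deriv_le_mul_abs_sub {u u' : ℝ → ℝ} {a b x₀ c K : ℝ}
    (hu : ∀ x ∈ Icc a b, HasDerivWithinAt u (u' x) (Icc a b) x)
    (hbound : ∀ x ∈ Icc a b, |u' x| ≤ K * |u x - c|) (hx₀ : x₀ ∈ Icc a b) (hc : u x₀ = c) :
    ∀ x ∈ Icc a b, u x = c := by
  intro x hx
  rcases le_total x₀ x with hle | hle
  · have hsub : Icc x₀ b ⊆ Icc a b := Icc_subset_Icc_left hx₀.1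
    exact eq_of_abs_deriv_le_mul_abs_sub_of_eq_left (fun y hy => (hu y (hsub hy)).mono hsub)
      (fun y hy => hbound y (hsub hy)) hc x ⟨hle, hx.2⟩
  · have hmaps : MapsTo Neg.neg (Icc (-x₀) (-a)) (Icc a b) :=
      fun t ht => ⟨le_neg.1 ht.2, (neg_le.1 ht.1).trans hx₀.2⟩
    have hneg := eq_of_abs_deriv_le_mul_abs_sub_of_eq_left (u := fun t => u (-t))
      (u' := fun t => -u' (-t)) (K := K) (c := c)
      (fun t ht => by
        have h := (hu (-t) (hmaps ht)).comp t (hasDerivWithinAt_neg t _) hmaps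
        rwa [mul_neg_one] at h)
      (fun t ht => by simpa using hbound (-t) (hmaps ht)) (by simpa using hc)
      (-x) ⟨neg_le_neg hle, neg_le_neg hx.1⟩
    simpa using hneg

theorem HasDerivWithinAt.of_local_left_inverse {𝕜 : Type*} [NontriviallyNormedField 𝕜]
    {f g : 𝕜 → 𝕜} {f' a : 𝕜} {s t : Set 𝕜} (hg : Tendsto g (𝓝[s] a) (𝓝[t] (g a)))
    (hf : HasDerivWithinAt f f' t (g a)) (hf' : f' ≠ 0) (ha : a ∈ s)
    (hfg : ∀ᶠ x in 𝓝[s] a, f (g x) = x) : HasDerivWithinAt g f'⁻¹ s a :=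
  HasFDerivWithinAt.of_local_left_inverse
    (f' := ContinuousLinearEquiv.unitsEquivAut 𝕜 (Units.mk0 f' hf')) hg hf ha hfg

theorem StrictMonoOn.exists_continuous_inverse {X : ℝ → ℝ} {a b : ℝ} (hab : a ≤ b)
    (hX : StrictMonoOn X (Icc a b)) (hc : ContinuousOn X (Icc a b)) :
    ∃ u : ℝ → ℝ, Continuous u ∧ StrictMonoOn u (Icc (X a) (X b)) ∧
      MapsTo u (Icc (X a) (X b)) (Icc a b) ∧ (∀ y ∈ Icc (X a) (X b), X (u y) = y) ∧
      ∀ v ∈ Icc a b, u (X v) = v := by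
  have hXab : X a ≤ X b := hX.monotoneOn (left_mem_Icc.2 hab) (right_mem_Icc.2 hab) hab
  have hsurj : SurjOn X (Icc a b) (Icc (X a) (X b)) := intermediate_value_Icc hab hc
  set w := Function.invFunOn X (Icc a b)
  have hmaps : MapsTo w (Icc (X a) (X b)) (Icc a b) := hsurj.mapsTo_invFunOn
  have hright : ∀ y ∈ Icc (X a) (X b), X (w y) = y := fun y hy => hsurj.rightInvOn_invFunOn hy
  have hXmaps : MapsTo X (Icc a b) (Icc (X a) (X b)) := fun v hv =>
    ⟨hX.monotoneOn (left_mem_Icc.2 hab) hv hv.1, hX.monotoneOn hv (right_mem_Icc.2 hab) hv.2⟩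
  have hleft : ∀ v ∈ Icc a b, w (X v) = v := fun v hv =>
    hX.injOn (hmaps (hXmaps hv)) hv (hright _ (hXmaps hv))
  have hmono : StrictMonoOn w (Icc (X a) (X b)) := by
    intro y hy z hz hyz
    by_contra hle
    have := hX.monotoneOn (hmaps hz) (hmaps hy) (not_lt.1 hle)
    rw [hright y hy, hright z hz] at this
    exact hyz.not_ge this
  set u := IccExtend hXab (fun y => w y)
  have hu : EqOn u w (Icc (X a) (X b)) := fun y hy => IccExtend_of_mem hXab _ hy
  have hcont : Continuous u := by
    let g : ℝ → Icc a b := fun y => ⟨u y, hmaps (projIcc (X a) (X b) hXab y).2⟩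
    have hg : Monotone g := fun y z hyz =>
      hmono.monotoneOn (projIcc _ _ hXab y).2 (projIcc _ _ hXab z).2 (monotone_projIcc hXab hyz)
    have hg' : Function.Surjective g := fun v =>
      ⟨X v, Subtype.ext ((hu (hXmaps v.2)).trans (hleft v v.2))⟩
    exact continuous_subtype_val.comp (hg.continuous_of_surjective hg')
  refine ⟨u, hcont, hmono.congr hu.symm, fun y hy => hu hy ▸ hmaps hy,
    fun y hy => hu hy ▸ hright y hy, fun v hv => (hu (hXmaps hv)).trans (hleft v hv)⟩

section SteadyWidth

variable {ε C a b : ℝ} {f : ℝ → ℝ}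

lemma ContinuousOn.inverseSlope_add {s : Set ℝ} (hf : ContinuousOn f s)
    (hpos : ∀ x ∈ s, 0 < f x + C) : ContinuousOn (fun x => inverseSlope ε (f x + C)) s :=
  continuousOn_inverseSlope.comp (hf.add continuousOn_const) hpos

lemma continuousOn_steadyWidth {δ : ℝ} (hab : a ≤ b) (hf : ContinuousOn f (Icc a b))
    (hδ : 0 < δ) :
    ContinuousOn (fun C => steadyWidth ε C f a b) {C | ∀ s ∈ Icc a b, δ ≤ f s + C} := by
  -- replace `f` by a continuous extension and the argument of `inverseSlope` by one bounded below
  set g := IccExtend hab (domRestrict (Icc a b) f)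
  have hg : Continuous g := (continuousOn_iff_continuous_domRestrict.1 hf).Icc_extend'
  have hF : Continuous (Function.uncurry fun C s => inverseSlope ε (max (g s + C) δ)) :=
    continuousOn_inverseSlope.comp_continuous (by fun_prop)
      fun p => hδ.trans_le (le_max_right _ _)
  refine (intervalIntegral.continuous_parametric_intervalIntegral_of_continuous'
    hF a b).continuousOn.congr fun C hC => intervalIntegral.integral_congr fun s hs => ?_
  rw [uIcc_of_le hab] at hs
  simp only [g, IccExtend_of_mem hab _ hs, domRestrict_apply, max_eq_left (hC s hs)]

lemma steadyWidth_lt_steadyWidth {C₁ C₂ : ℝ} (hab : a < b) (hf : ContinuousOn f (Icc a b))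
    (hC : C₁ < C₂) (h₁ : ∀ s ∈ Icc a b, 0 < f s + C₁) (h₂ : ∀ s ∈ Icc a b, f s + C₂ ≤ ε) :
    steadyWidth ε C₂ f a b < steadyWidth ε C₁ f a b := by
  have hlt : ∀ s ∈ Icc a b, inverseSlope ε (f s + C₂) < inverseSlope ε (f s + C₁) :=
    fun s hs => strictAntiOn_inverseSlope ⟨h₁ s hs, by linarith [h₂ s hs]⟩
      ⟨(h₁ s hs).trans (by linarith), h₂ s hs⟩ (by linarith)
  exact intervalIntegral.integral_lt_integral_of_continuousOn_of_le_of_exists_lt hab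
    (hf.inverseSlope_add fun s hs => (h₁ s hs).trans (by linarith)) (hf.inverseSlope_add h₁)
    (fun s hs => (hlt s (Ioc_subset_Icc_self hs)).le)
    ⟨a, left_mem_Icc.2 hab.le, hlt a (left_mem_Icc.2 hab.le)⟩

lemma steadyWidth_sub_eq (M : ℝ) :
    steadyWidth ε (ε - M) f a b =
      ∫ u in a..b, √((M - f u) * (f u + 2 * ε - M)) / (f u + ε - M) := by
  refine intervalIntegral.integral_congr fun s _ => ?_
  rw [inverseSlope, ← add_sub_assoc]
  congr 2
  ring

lemma mul_log_le_steadyWidth {K δ z s₀ : ℝ} (hab : a ≤ b) (hK : 0 < K) (hδ : 0 < δ)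
    (hf : ContinuousOn f (Icc a b)) (hs₀ : s₀ ∈ Icc a b) (hlow : ∀ s ∈ Icc a b, δ ≤ f s + C)
    (hlip : ∀ s ∈ Icc a b, f s + C ≤ K * |s - s₀| + δ) (hz : ∀ s ∈ Icc a b, f s + C ≤ z) :
    √(ε ^ 2 - z ^ 2) * (log ((K * (b - a) + δ) / δ) / K) ≤ steadyWidth ε C f a b := by
  have hcont : Continuous fun s => √(ε ^ 2 - z ^ 2) / (K * |s - s₀| + δ) :=
    continuous_const.div (by fun_prop) fun s => by positivity
  calc √(ε ^ 2 - z ^ 2) * (log ((K * (b - a) + δ) / δ) / K)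
      ≤ √(ε ^ 2 - z ^ 2) * ∫ s in a..b, (K * |s - s₀| + δ)⁻¹ := by
        gcongr
        exact log_div_le_integral_inv_mul_abs_sub_add hK hδ hs₀
    _ = ∫ s in a..b, √(ε ^ 2 - z ^ 2) / (K * |s - s₀| + δ) := by
        rw [← intervalIntegral.integral_const_mul]
        rfl
    _ ≤ steadyWidth ε C f a b := by
        refine intervalIntegral.integral_mono_on hab (hcont.intervalIntegrable a b)
          ((hf.inverseSlope_add fun s hs => hδ.trans_le (hlow s hs)).intervalIntegrable_of_Icc
            hab) fun s hs => ?_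
        have hpos := hδ.trans_le (hlow s hs)
        calc √(ε ^ 2 - z ^ 2) / (K * |s - s₀| + δ) ≤ √(ε ^ 2 - z ^ 2) / (f s + C) :=
              div_le_div_of_nonneg_left (sqrt_nonneg _) hpos (hlip s hs)
          _ ≤ inverseSlope ε (f s + C) := div_le_inverseSlope hpos (hz s hs)

lemma tendsto_steadyWidth_atTop {K : ℝ≥0} {m M : ℝ} (hab : a < b)
    (hf : LipschitzOnWith K f (Icc a b)) (hm : IsLeast (f '' Icc a b) m)
    (hM : M ∈ upperBounds (f '' Icc a b)) (hMm : M - m < ε) :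
    Tendsto (fun δ => steadyWidth ε (δ - m) f a b) (𝓝[>] 0) atTop := by
  obtain ⟨⟨s₀, hs₀, rfl⟩, hmle⟩ := hm
  set κ := ε - (M - f s₀)
  have hκ : 0 < κ := by linarith
  have hρ : 0 < √(ε ^ 2 - (ε - κ / 2) ^ 2) :=
    sqrt_pos.2 (by nlinarith [hM ⟨s₀, hs₀, rfl⟩])
  have hL : 0 < (K + 1 : ℝ) := by positivity
  have hlow : ∀ δ ∈ Ioo 0 (κ / 2), √(ε ^ 2 - (ε - κ / 2) ^ 2) *
      (log (((K + 1) * (b - a) + δ) / δ) / (K + 1)) ≤ steadyWidth ε (δ - f s₀) f a b := by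
    refine fun δ hδ => mul_log_le_steadyWidth hab.le hL hδ.1 hf.continuousOn hs₀
      (fun s hs => by linarith [hmle ⟨s, hs, rfl⟩]) (fun s hs => ?_)
      fun s hs => by linarith [hM ⟨s, hs, rfl⟩, hδ.2]
    have := hf.dist_le_mul s hs s₀ hs₀
    rw [Real.dist_eq, Real.dist_eq] at this
    nlinarith [le_abs_self (f s - f s₀), abs_nonneg (s - s₀)]
  have hlim : Tendsto (fun δ => √(ε ^ 2 - (ε - κ / 2) ^ 2) *
      (log (((K + 1) * (b - a) + δ) / δ) / (K + 1))) (𝓝[>] 0) atTop := by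
    have h := tendsto_atTop_add_const_right _ 1
      (tendsto_inv_nhdsGT_zero.const_mul_atTop (by nlinarith : 0 < (K + 1 : ℝ) * (b - a)))
    refine (((tendsto_log_atTop.comp h).atTop_div_const hL).const_mul_atTop hρ).congr'
      (eventually_nhdsWithin_of_forall fun δ (hδ : 0 < δ) => ?_)
    simp only [Function.comp_apply]
    congr 3
    field_simp
  refine tendsto_atTop_mono' _ ?_ hlim
  filter_upwards [Ioo_mem_nhdsGT (half_pos hκ)] with δ hδ using hlow δ hδ

lemma exists_steadyWidth_eq {K : ℝ≥0} {m M L : ℝ} (hab : a < b)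
    (hf : LipschitzOnWith K f (Icc a b)) (hm : IsLeast (f '' Icc a b) m)
    (hM : M ∈ upperBounds (f '' Icc a b)) (hMm : M - m < ε)
    (hL : steadyWidth ε (ε - M) f a b < L) :
    ∃ C, (∀ s ∈ Icc a b, f s + C ∈ Ioo 0 ε) ∧ steadyWidth ε C f a b = L := by
  have hκ : 0 < ε - (M - m) := by linarith
  obtain ⟨δ, hδL, hδ⟩ := (((tendsto_steadyWidth_atTop hab hf hm hM hMm).eventually_ge_atTop
    L).and (Ioo_mem_nhdsGT hκ)).exists
  have hlow : ∀ C ∈ Icc (δ - m) (ε - M), ∀ s ∈ Icc a b, δ ≤ f s + C := fun C hC s hs => by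
    linarith [hm.2 ⟨s, hs, rfl⟩, hC.1]
  obtain ⟨C, hC, hTC⟩ := intermediate_value_Icc' (by linarith [hδ.2])
    ((continuousOn_steadyWidth hab.le hf.continuousOn hδ.1).mono hlow) ⟨hL.le, hδL⟩
  have hCM : C < ε - M := lt_of_le_of_ne hC.2 (by rintro rfl; exact hL.ne hTC)
  exact ⟨C, fun s hs => ⟨hδ.1.trans_le (hlow C hC s hs), by linarith [hM ⟨s, hs, rfl⟩]⟩, hTC⟩

end SteadyWidth

namespace IsIncreasingSteadyState

variable {ε ℓ um up C : ℝ} {f u : ℝ → ℝ}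

lemma continuousOn (h : IsIncreasingSteadyState ε ℓ um up f u C) :
    ContinuousOn u (Icc (-ℓ) ℓ) := by
  obtain ⟨-, -, -, u', -, hd, -⟩ := h
  exact fun x hx => (hd x hx).continuousWithinAt

lemma mapsTo (h : IsIncreasingSteadyState ε ℓ um up f u C) :
    MapsTo u (Icc (-ℓ) ℓ) (Icc um up) := by
  obtain ⟨hmono, hl, hr, -⟩ := h
  exact fun x hx => ⟨hl ▸ hmono.monotoneOn (left_mem_Icc.2 (hx.1.trans hx.2)) hx hx.1,
    hr ▸ hmono.monotoneOn hx (right_mem_Icc.2 (hx.1.trans hx.2)) hx.2⟩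

lemma surjOn (h : IsIncreasingSteadyState ε ℓ um up f u C) (hℓ : 0 ≤ ℓ) :
    SurjOn u (Icc (-ℓ) ℓ) (Icc um up) := by
  have := intermediate_value_Icc (by linarith : -ℓ ≤ ℓ) h.continuousOn
  rwa [h.2.1, h.2.2.1] at this

lemma abs_add_lt (h : IsIncreasingSteadyState ε ℓ um up f u C) (hε : 0 < ε) (hℓ : 0 ≤ ℓ) :
    ∀ s ∈ Icc um up, |f s + C| < ε := by
  intro s hs
  obtain ⟨x, hx, rfl⟩ := h.surjOn hℓ hs
  obtain ⟨-, -, -, u', -, -, heq⟩ := h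
  exact heq x hx ▸ abs_flux_lt hε (u' x)

lemma nonneg (h : IsIncreasingSteadyState ε ℓ um up f u C) (hε : 0 < ε) (hℓ : 0 < ℓ) :
    ∀ s ∈ Icc um up, 0 ≤ f s + C := by
  intro s hs
  obtain ⟨x, hx, rfl⟩ := h.surjOn hℓ.le hs
  obtain ⟨hmono, -, -, u', -, hd, heq⟩ := h
  have hacc : AccPt x (𝓟 (Icc (-ℓ) ℓ)) :=
    uniqueDiffWithinAt_iff_accPt.1 (uniqueDiffOn_Icc (by linarith) x hx)
  have := (hd x hx).nonneg_of_monotoneOn hacc hmono.monotoneOn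
  rw [← heq x hx]
  positivity

lemma exists_deriv (h : IsIncreasingSteadyState ε ℓ um up f u C) (hε : 0 < ε) :
    ∃ u' : ℝ → ℝ, ContinuousOn u' (Icc (-ℓ) ℓ) ∧ ∀ x ∈ Icc (-ℓ) ℓ,
      HasDerivWithinAt u (u' x) (Icc (-ℓ) ℓ) x ∧ u' x = (inverseSlope ε (f (u x) + C))⁻¹ := by
  obtain ⟨-, -, -, u', hc, hd, heq⟩ := h
  exact ⟨u', hc, fun x hx => ⟨hd x hx, by rw [← heq x hx, inv_inverseSlope_flux hε]⟩⟩

lemma mem_Ioo (h : IsIncreasingSteadyState ε ℓ um up f u C) (hε : 0 < ε) (hℓ : 0 < ℓ)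
    {K : ℝ≥0} (hf : LipschitzOnWith K f (Icc um up)) : ∀ s ∈ Icc um up, f s + C ∈ Ioo 0 ε := by
  intro s₀ hs₀
  refine ⟨(h.nonneg hε hℓ s₀ hs₀).lt_of_ne' fun h0 => ?_,
    (abs_lt.1 (h.abs_add_lt hε hℓ.le s₀ hs₀)).2⟩
  obtain ⟨x₀, hx₀, hux₀⟩ := h.surjOn hℓ.le hs₀
  obtain ⟨sM, hsM, hmax⟩ := isCompact_Icc.exists_isMaxOn ⟨s₀, hs₀⟩ hf.continuousOn
  have hz : f sM + C < ε := (abs_lt.1 (h.abs_add_lt hε hℓ.le sM hsM)).2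
  set ρ := √(ε ^ 2 - (f sM + C) ^ 2)
  have hρ : 0 < ρ := sqrt_pos.2 (by nlinarith [h.nonneg hε hℓ sM hsM])
  obtain ⟨u', -, hu'⟩ := h.exists_deriv hε
  -- `u'` vanishes where `u = s₀` and is Lipschitz in `u`, so `u ≡ s₀` by Grönwall
  have hbound : ∀ x ∈ Icc (-ℓ) ℓ, |u' x| ≤ K / ρ * |u x - s₀| := by
    intro x hx
    have hlip := hf.dist_le_mul _ (h.mapsTo hx) s₀ hs₀
    rw [Real.dist_eq, Real.dist_eq] at hlip
    rw [(hu' x hx).2]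
    calc |(inverseSlope ε (f (u x) + C))⁻¹| ≤ (f (u x) + C) / ρ :=
          inv_inverseSlope_le (h.nonneg hε hℓ _ (h.mapsTo hx))
            (by linarith [isMaxOn_iff.1 hmax _ (h.mapsTo hx)]) hz
      _ ≤ K * |u x - s₀| / ρ := by
          gcongr
          linarith [le_abs_self (f (u x) - f s₀)]
      _ = K / ρ * |u x - s₀| := by ring
  have hconst := eq_of_abs_deriv_le_mul_abs_sub (fun x hx => (hu' x hx).1) hbound hx₀ hux₀
  have hlt := h.1 (left_mem_Icc.2 (by linarith)) (right_mem_Icc.2 (by linarith))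
    (by linarith : -ℓ < ℓ)
  rw [hconst _ (left_mem_Icc.2 (by linarith)), hconst _ (right_mem_Icc.2 (by linarith))] at hlt
  exact hlt.false

lemma integral_inverseSlope (h : IsIncreasingSteadyState ε ℓ um up f u C) (hε : 0 < ε)
    (hℓ : 0 < ℓ) {K : ℝ≥0} (hf : LipschitzOnWith K f (Icc um up)) :
    ∀ x ∈ Icc (-ℓ) ℓ, ∫ s in um..u x, inverseSlope ε (f s + C) = x + ℓ := by
  intro x hx
  obtain ⟨u', hu'c, hu'⟩ := h.exists_deriv hε
  have hC := h.mem_Ioo hε hℓ hf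
  have hsub : uIcc (-ℓ) x ⊆ Icc (-ℓ) ℓ := by
    rw [uIcc_of_le hx.1]
    exact Icc_subset_Icc_right hx.2
  have hderiv : ∀ y ∈ Ioo (min (-ℓ) x) (max (-ℓ) x), HasDerivWithinAt u (u' y) (Ioi y) y := by
    intro y hy
    rw [min_eq_left hx.1, max_eq_right hx.1] at hy
    exact ((hu' y ⟨hy.1.le, hy.2.le.trans hx.2⟩).1.hasDerivAt
      (Icc_mem_nhds hy.1 (hy.2.trans_le hx.2))).hasDerivWithinAt
  have hsubst := intervalIntegral.integral_comp_mul_deriv'' (h.continuousOn.mono hsub) hderiv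
    (hu'c.mono hsub) ((hf.continuousOn.inverseSlope_add (ε := ε) fun s hs => (hC s hs).1).mono
      ((h.mapsTo.mono_left hsub).image_subset))
  rw [h.2.1] at hsubst
  rw [← hsubst]
  calc ∫ y in -ℓ..x, ((fun s => inverseSlope ε (f s + C)) ∘ u) y * u' y
      = ∫ _ in -ℓ..x, (1 : ℝ) := intervalIntegral.integral_congr fun y hy => by
        rw [Function.comp_apply, (hu' y (hsub hy)).2]
        exact mul_inv_cancel₀ (inverseSlope_pos (hC _ (h.mapsTo (hsub hy)))).ne'
    _ = x + ℓ := by simp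

lemma steadyWidth_eq (h : IsIncreasingSteadyState ε ℓ um up f u C) (hε : 0 < ε)
    (hℓ : 0 < ℓ) {K : ℝ≥0} (hf : LipschitzOnWith K f (Icc um up)) :
    steadyWidth ε C f um up = 2 * ℓ := by
  have := h.integral_inverseSlope hε hℓ hf ℓ (right_mem_Icc.2 (by linarith))
  rw [h.2.2.1] at this
  rw [steadyWidth, this]
  ring

lemma sub_lt_and_steadyWidth_lt {m M : ℝ} (h : IsIncreasingSteadyState ε ℓ um up f u C)
    (hε : 0 < ε) (hℓ : 0 < ℓ) (hlt : um < up) {K : ℝ≥0} (hf : LipschitzOnWith K f (Icc um up))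
    (hm : IsLeast (f '' Icc um up) m) (hM : IsGreatest (f '' Icc um up) M) :
    M - m < ε ∧ steadyWidth ε (ε - M) f um up < 2 * ℓ := by
  have hC := h.mem_Ioo hε hℓ hf
  obtain ⟨⟨sm, hsm, rfl⟩, -⟩ := hm
  obtain ⟨⟨sM, hsM, rfl⟩, hMub⟩ := hM
  refine ⟨by linarith [(hC sm hsm).1, (hC sM hsM).2], h.steadyWidth_eq hε hℓ hf ▸ ?_⟩
  exact steadyWidth_lt_steadyWidth hlt hf.continuousOn (by linarith [(hC sM hsM).2])
    (fun s hs => (hC s hs).1) fun s hs => by linarith [hMub ⟨s, hs, rfl⟩]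

lemma const_eq {u₂ : ℝ → ℝ} {C₂ : ℝ} (h₁ : IsIncreasingSteadyState ε ℓ um up f u C)
    (h₂ : IsIncreasingSteadyState ε ℓ um up f u₂ C₂) (hε : 0 < ε) (hℓ : 0 < ℓ) (hlt : um < up)
    {K : ℝ≥0} (hf : LipschitzOnWith K f (Icc um up)) : C = C₂ := by
  have hwidth {u₁ u₂ : ℝ → ℝ} {C₁ C₂ : ℝ} (h₁ : IsIncreasingSteadyState ε ℓ um up f u₁ C₁)
      (h₂ : IsIncreasingSteadyState ε ℓ um up f u₂ C₂) : ¬ C₁ < C₂ := fun hC =>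
    (steadyWidth_lt_steadyWidth hlt hf.continuousOn hC (fun s hs => (h₁.mem_Ioo hε hℓ hf s hs).1)
      fun s hs => (h₂.mem_Ioo hε hℓ hf s hs).2.le).ne
      ((h₂.steadyWidth_eq hε hℓ hf).trans (h₁.steadyWidth_eq hε hℓ hf).symm)
  exact le_antisymm (not_lt.1 (hwidth h₂ h₁)) (not_lt.1 (hwidth h₁ h₂))

lemma eqOn {u₂ : ℝ → ℝ} (h₁ : IsIncreasingSteadyState ε ℓ um up f u C)
    (h₂ : IsIncreasingSteadyState ε ℓ um up f u₂ C) (hε : 0 < ε) (hℓ : 0 < ℓ)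
    {K : ℝ≥0} (hf : LipschitzOnWith K f (Icc um up)) : EqOn u u₂ (Icc (-ℓ) ℓ) := by
  intro x hx
  have hC := h₁.mem_Ioo hε hℓ hf
  refine (strictMonoOn_integral_of_pos (hf.continuousOn.inverseSlope_add fun s hs => (hC s hs).1)
    fun s hs => inverseSlope_pos (hC s hs)).injOn (h₁.mapsTo hx) (h₂.mapsTo hx) ?_
  simp only [h₁.integral_inverseSlope hε hℓ hf x hx, h₂.integral_inverseSlope hε hℓ hf x hx]

end IsIncreasingSteadyState

lemma exists_isIncreasingSteadyState {ε ℓ um up C : ℝ} {f : ℝ → ℝ} (hlt : um < up)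
    (hf : ContinuousOn f (Icc um up)) (hC : ∀ s ∈ Icc um up, f s + C ∈ Ioo 0 ε)
    (hT : steadyWidth ε C f um up = 2 * ℓ) : ∃ u, IsIncreasingSteadyState ε ℓ um up f u C := by
  set G := fun s => inverseSlope ε (f s + C)
  have hG : ContinuousOn G (Icc um up) := hf.inverseSlope_add fun s hs => (hC s hs).1
  have hGpos : ∀ s ∈ Icc um up, 0 < G s := fun s hs => inverseSlope_pos (hC s hs)
  set X := fun v => (∫ s in um..v, G s) - ℓ
  have hX : ∀ v ∈ Icc um up, HasDerivWithinAt X (G v) (Icc um up) v := by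
    intro v hv
    have : Fact (v ∈ Icc um up) := ⟨hv⟩
    exact (intervalIntegral.integral_hasDerivWithinAt_right
      ((hG.mono (uIcc_subset_Icc (left_mem_Icc.2 hlt.le) hv)).intervalIntegrable)
      (hG.stronglyMeasurableAtFilter_nhdsWithin measurableSet_Icc v :
        StronglyMeasurableAtFilter G (𝓝[Icc um up] v)) (hG v hv)).sub_const ℓ
  have hXmono : StrictMonoOn X (Icc um up) := fun v hv w hw hvw =>
    sub_lt_sub_right (strictMonoOn_integral_of_pos hG hGpos hv hw hvw) ℓ
  obtain ⟨u, hu, humono, humaps, hXu, huX⟩ :=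
    hXmono.exists_continuous_inverse hlt.le fun v hv => (hX v hv).continuousWithinAt
  have hXl : X um = -ℓ := by simp [X]
  have hXr : X up = ℓ := by
    simp only [X]
    rw [← steadyWidth, hT]
    ring
  rw [hXl, hXr] at hXu humaps humono
  refine ⟨u, humono, hXl ▸ huX um (left_mem_Icc.2 hlt.le), hXr ▸ huX up (right_mem_Icc.2 hlt.le),
    fun x => (G (u x))⁻¹, ?_, fun x hx => ?_, fun x hx => flux_inv_inverseSlope (hC _ (humaps hx))⟩
  · exact (hG.comp hu.continuousOn humaps).inv₀ fun x hx => (hGpos _ (humaps hx)).ne'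
  exact (hX (u x) (humaps hx)).of_local_left_inverse
    (hu.continuousWithinAt.tendsto_nhdsWithin humaps) (hGpos _ (humaps hx)).ne' hx
    (eventually_nhdsWithin_of_forall hXu)

/-- existence and uniqueness of the increasing steady state:
a strictly increasing C¹ solution of `ε u'/√(1+(u')²) = f(u) + C` on `[−ℓ,ℓ]` with
`u(−ℓ)=u₋`, `u(ℓ)=u₊` exists iff `M − m < ε` and `2ℓ > c_I`; in that case it is unique. -/
theorem increasing_steady_state_iff
    (ε ℓ um up : ℝ) (hε : 0 < ε) (hℓ : 0 < ℓ) (hlt : um < up)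
    (f : ℝ → ℝ) (hf : ContDiffOn ℝ 1 f (Set.Icc um up))
    (m M : ℝ)
    (hm : IsLeast (f '' Set.Icc um up) m)
    (hM : IsGreatest (f '' Set.Icc um up) M) :
    ((∃ u : ℝ → ℝ, ∃ C : ℝ, IsIncreasingSteadyState ε ℓ um up f u C) ↔
      (M - m < ε ∧ 2 * ℓ > ∫ u in um..up,
        Real.sqrt ((M - f u) * (f u + 2 * ε - M)) / (f u + ε - M))) ∧
    ((M - m < ε ∧ 2 * ℓ > ∫ u in um..up,
        Real.sqrt ((M - f u) * (f u + 2 * ε - M)) / (f u + ε - M)) →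
      ∀ u₁ C₁ u₂ C₂, IsIncreasingSteadyState ε ℓ um up f u₁ C₁ →
        IsIncreasingSteadyState ε ℓ um up f u₂ C₂ →
        Set.EqOn u₁ u₂ (Set.Icc (-ℓ) ℓ) ∧ C₁ = C₂) := by
  obtain ⟨K, hK⟩ := hf.exists_lipschitzOnWith one_ne_zero (convex_Icc um up) isCompact_Icc
  simp only [← steadyWidth_sub_eq, gt_iff_lt]
  refine ⟨⟨fun ⟨u, C, h⟩ => h.sub_lt_and_steadyWidth_lt hε hℓ hlt hK hm hM, ?_⟩, ?_⟩
  · rintro ⟨hMm, hwidth⟩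
    obtain ⟨C, hC, hTC⟩ := exists_steadyWidth_eq hlt hK hm hM.2 hMm hwidth
    obtain ⟨u, hu⟩ := exists_isIncreasingSteadyState hlt hK.continuousOn hC hTC
    exact ⟨u, C, hu⟩
  · rintro - u₁ C₁ u₂ C₂ h₁ h₂
    obtain rfl := h₁.const_eq h₂ hε hℓ hlt hK
    exact ⟨h₁.eqOn h₂ hε hℓ hK, rfl⟩
end

section
/- Let ε > 0, ℓ > 0, ξ ∈ ℝ, u₋ > 0, and let f : ℝ → ℝ be convex and continuously differentiable on [0, u₋] with f(0) = 0, F := f(u₋) > 0, and f'(u₋) > 0. Let κ ∈ (F, ε) be such that 0 < κ − f(s) < ε for every s ∈ [0, u₋], and suppose ξ + ℓ = ∫_0^{u₋} √(ε² − (f(s) − κ)²) / (κ − f(s)) ds. Then u₋ f'(u₋) / ( exp( f'(u₋)(ξ + ℓ + u₋)/ε ) − 1 ) ≤ κ − F ≤ F / ( exp( F (ξ + ℓ)/(ε u₋) ) − 1 ). -/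
/-!
Write `d(s) = κ - f(s) ∈ (0, ε)` and `K = κ - f(u₋)`. The integrand `√(ε² - d²)/d` lies between
`ε/d - 1` and `ε/d`, and convexity squeezes `d` between two affine functions vanishing nowhere on
`[0, u₋]`: the chord of `f` gives `d(s) ≥ K + (F/u₋)(u₋ - s)` and the tangent at `u₋` gives
`d(s) ≤ K + f'(u₋)(u₋ - s)`. Integrating the reciprocals of these affine functions gives
`ξ + ℓ ≤ (ε u₋/F) log(1 + F/K)` and `(ε/f'(u₋)) log(1 + u₋ f'(u₋)/K) - u₋ ≤ ξ + ℓ`, and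
exponentiating solves both for `K`.
-/

open Set Real intervalIntegral

namespace ConvexOn

variable {S : Set ℝ} {f : ℝ → ℝ} {a b s : ℝ}

lemma le_secant (hf : ConvexOn ℝ (Icc a b) f) (hab : a < b) (hs : s ∈ Icc a b) :
    f s ≤ f a + (f b - f a) / (b - a) * (s - a) := by
  rcases hs.1.eq_or_lt with rfl | has
  · simp
  have hsec :=
    hf.secant_mono (left_mem_Icc.2 hab.le) hs (right_mem_Icc.2 hab.le) has.ne' hab.ne' hs.2
  rw [div_le_iff₀ (sub_pos.2 has)] at hsec
  linarith

lemma add_deriv_mul_sub_le {f' : ℝ} (hf : ConvexOn ℝ S f) (ha : a ∈ S) (hs : s ∈ S)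
    (hf' : HasDerivWithinAt f f' S a) : f a + f' * (s - a) ≤ f s := by
  rcases lt_trichotomy s a with hsa | rfl | has
  · have h := hf.slope_le_of_hasDerivWithinAt hs ha hsa hf'
    rw [slope_def_field, div_le_iff₀ (sub_pos.2 hsa)] at h
    linarith
  · simp
  · have h := hf.le_slope_of_hasDerivWithinAt ha hs has hf'
    rw [slope_def_field, le_div_iff₀ (sub_pos.2 has)] at h
    linarith

end ConvexOn

lemma integral_inv_add_mul_sub {K q b : ℝ} (hq : q ≠ 0) (hK : 0 < K) (hKqb : 0 < K + q * b) :
    ∫ s in (0:ℝ)..b, (K + q * (b - s))⁻¹ = q⁻¹ * log (1 + q * b / K) := by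
  have hflip := integral_comp_sub_left (fun x => (K + q * x)⁻¹) (a := 0) (b := b) b
  have hscale := integral_comp_mul_add (fun x => x⁻¹) hq K (a := 0) (b := b)
  simp only [sub_self, sub_zero, mul_zero, smul_eq_mul, add_comm _ K, add_zero] at hflip hscale
  rw [hflip, hscale, integral_inv (notMem_uIcc_of_lt hK hKqb), add_div, div_self hK.ne']

lemma sqrt_sq_sub_sq_div_le {ε d : ℝ} (hε : 0 ≤ ε) (hd : 0 ≤ d) :
    √(ε ^ 2 - d ^ 2) / d ≤ ε / d := by
  gcongr
  calc √(ε ^ 2 - d ^ 2) ≤ √(ε ^ 2) := by gcongr; nlinarith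
    _ = ε := sqrt_sq hε

lemma div_sub_one_le_sqrt_sq_sub_sq_div {ε d : ℝ} (hd : 0 < d) (hdε : d ≤ ε) :
    ε / d - 1 ≤ √(ε ^ 2 - d ^ 2) / d := by
  have h : ε - d ≤ √(ε ^ 2 - d ^ 2) :=
    le_sqrt_of_sq_le (by nlinarith)
  calc ε / d - 1 = (ε - d) / d := by field_simp
    _ ≤ √(ε ^ 2 - d ^ 2) / d := by gcongr

section BandIntegral

variable {ε K q b : ℝ} {d : ℝ → ℝ}

lemma ContinuousOn.sqrt_sq_sub_sq_div {s : Set ℝ} (hd : ContinuousOn d s) (h0 : ∀ x ∈ s, d x ≠ 0) :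
    ContinuousOn (fun x => √(ε ^ 2 - d x ^ 2) / d x) s := by
  fun_prop (disch := assumption)

lemma add_mul_sub_pos {s : ℝ} (hK : 0 < K) (hq : 0 ≤ q) (hs : s ≤ b) : 0 < K + q * (b - s) := by
  nlinarith

lemma intervalIntegrable_inv_add_mul_sub (hK : 0 < K) (hq : 0 ≤ q) (hb : 0 ≤ b) :
    IntervalIntegrable (fun s => (K + q * (b - s))⁻¹) MeasureTheory.volume 0 b :=
  ContinuousOn.intervalIntegrable_of_Icc hb <|
    ContinuousOn.inv₀ (by fun_prop) fun _ hs => (add_mul_sub_pos hK hq hs.2).ne'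

lemma intervalIntegrable_sqrt_sq_sub_sq_div (hd : ContinuousOn d (Icc 0 b)) (hb : 0 ≤ b)
    (h0 : ∀ s ∈ Icc 0 b, d s ≠ 0) :
    IntervalIntegrable (fun s => √(ε ^ 2 - d s ^ 2) / d s) MeasureTheory.volume 0 b :=
  (hd.sqrt_sq_sub_sq_div h0).intervalIntegrable_of_Icc hb

lemma integral_sqrt_sq_sub_sq_div_le (hd : ContinuousOn d (Icc 0 b)) (hε : 0 ≤ ε) (hK : 0 < K)
    (hq : 0 < q) (hb : 0 ≤ b) (hdK : ∀ s ∈ Icc 0 b, K + q * (b - s) ≤ d s) :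
    ∫ s in 0..b, √(ε ^ 2 - d s ^ 2) / d s ≤ ε * q⁻¹ * log (1 + q * b / K) := by
  have hpos (s) (hs : s ∈ Icc 0 b) := add_mul_sub_pos hK hq.le hs.2
  calc ∫ s in 0..b, √(ε ^ 2 - d s ^ 2) / d s ≤ ∫ s in 0..b, ε * (K + q * (b - s))⁻¹ := by
        refine integral_mono_on hb ?_ ((intervalIntegrable_inv_add_mul_sub hK hq.le hb).const_mul ε)
          fun s hs => ?_
        · exact intervalIntegrable_sqrt_sq_sub_sq_div hd hb fun s hs =>
            ((hpos s hs).trans_le (hdK s hs)).ne'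
        · calc √(ε ^ 2 - d s ^ 2) / d s ≤ ε / d s :=
                sqrt_sq_sub_sq_div_le hε ((hpos s hs).le.trans (hdK s hs))
            _ ≤ ε / (K + q * (b - s)) := div_le_div_of_nonneg_left hε (hpos s hs) (hdK s hs)
            _ = ε * (K + q * (b - s))⁻¹ := div_eq_mul_inv _ _
    _ = ε * q⁻¹ * log (1 + q * b / K) := by
        rw [integral_const_mul,
          integral_inv_add_mul_sub hq.ne' hK (by simpa using hpos 0 ⟨le_rfl, hb⟩), mul_assoc]

lemma le_integral_sqrt_sq_sub_sq_div (hd : ContinuousOn d (Icc 0 b)) (hK : 0 < K) (hq : 0 < q)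
    (hb : 0 ≤ b) (hband : ∀ s ∈ Icc 0 b, 0 < d s ∧ d s ≤ ε)
    (hdK : ∀ s ∈ Icc 0 b, d s ≤ K + q * (b - s)) :
    ε * q⁻¹ * log (1 + q * b / K) - b ≤ ∫ s in 0..b, √(ε ^ 2 - d s ^ 2) / d s := by
  have hpos (s) (hs : s ∈ Icc 0 b) := add_mul_sub_pos hK hq.le hs.2
  have hint := (intervalIntegrable_inv_add_mul_sub hK hq.le hb).const_mul ε
  calc ε * q⁻¹ * log (1 + q * b / K) - b = ∫ s in 0..b, (ε * (K + q * (b - s))⁻¹ - 1) := by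
        rw [integral_sub hint intervalIntegrable_const, integral_const_mul,
          integral_inv_add_mul_sub hq.ne' hK (by simpa using hpos 0 ⟨le_rfl, hb⟩)]
        simp [mul_assoc]
    _ ≤ ∫ s in 0..b, √(ε ^ 2 - d s ^ 2) / d s := by
        refine integral_mono_on hb (hint.sub intervalIntegrable_const) ?_ fun s hs => ?_
        · exact intervalIntegrable_sqrt_sq_sub_sq_div hd hb fun s hs => (hband s hs).1.ne'
        · obtain ⟨hd0, hdε⟩ := hband s hs
          calc ε * (K + q * (b - s))⁻¹ - 1 = ε / (K + q * (b - s)) - 1 := by rw [div_eq_mul_inv]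
            _ ≤ ε / d s - 1 := by
                gcongr ?_ - 1
                exact div_le_div_of_nonneg_left (hd0.le.trans hdε) hd0 (hdK s hs)
            _ ≤ √(ε ^ 2 - d s ^ 2) / d s := div_sub_one_le_sqrt_sq_sub_sq_div hd0 hdε

lemma integral_sqrt_sq_sub_sq_div_pos (hd : ContinuousOn d (Icc 0 b)) (hb : 0 < b)
    (hband : ∀ s ∈ Icc 0 b, 0 < d s ∧ d s < ε) :
    0 < ∫ s in 0..b, √(ε ^ 2 - d s ^ 2) / d s := by
  refine intervalIntegral_pos_of_pos_on
    (intervalIntegrable_sqrt_sq_sub_sq_div hd hb.le fun s hs => (hband s hs).1.ne')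
    (fun s hs => ?_) hb
  obtain ⟨hd0, hdε⟩ := hband s (Ioo_subset_Icc_self hs)
  exact div_pos (sqrt_pos.2 (by nlinarith)) hd0

end BandIntegral

lemma div_exp_sub_one_le_of_log_le {a K t : ℝ} (ha : 0 < a) (hK : 0 < K)
    (h : log (1 + a / K) ≤ t) : a / (exp t - 1) ≤ K := by
  have hexp : 1 + a / K ≤ exp t := (log_le_iff_le_exp (by positivity)).1 h
  have haK : a / K ≤ exp t - 1 := by linarith
  rw [div_le_iff₀ (by linarith [div_pos ha hK])]
  rwa [div_le_iff₀ hK, mul_comm] at haK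

lemma le_div_exp_sub_one_of_le_log {a K t : ℝ} (ha : 0 ≤ a) (hK : 0 < K) (ht : 0 < t)
    (h : t ≤ log (1 + a / K)) : K ≤ a / (exp t - 1) := by
  have hexp : exp t ≤ 1 + a / K := (le_log_iff_exp_le (by positivity)).1 h
  have haK : exp t - 1 ≤ a / K := by linarith
  rw [le_div_iff₀ (by linarith [one_lt_exp_iff.2 ht])]
  rwa [le_div_iff₀ hK, mul_comm] at haK

theorem kappa_minus_bounds_general
    (ε ℓ ξ um : ℝ) (hum : 0 < um)
    (f f' : ℝ → ℝ)
    (hconv : ConvexOn ℝ (Set.Icc 0 um) f)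
    (hderiv : ∀ s ∈ Set.Icc 0 um, HasDerivWithinAt f (f' s) (Set.Icc 0 um) s)
    (hf0 : f 0 = 0) (hF : 0 < f um) (hf'um : 0 < f' um)
    (κ : ℝ)
    (hband : ∀ s ∈ Set.Icc 0 um, 0 < κ - f s ∧ κ - f s < ε)
    (himp : ξ + ℓ = ∫ s in (0:ℝ)..um, Real.sqrt (ε ^ 2 - (f s - κ) ^ 2) / (κ - f s)) :
    um * f' um / (Real.exp (f' um * (ξ + ℓ + um) / ε) - 1) ≤ κ - f um ∧
    κ - f um ≤ f um / (Real.exp (f um * (ξ + ℓ) / (ε * um)) - 1) := by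
  have hum_mem : um ∈ Icc 0 um := right_mem_Icc.2 hum.le
  obtain ⟨hK, hKε⟩ := hband um hum_mem
  have hε : 0 < ε := hK.trans hKε
  have hd : ContinuousOn (fun s => κ - f s) (Icc 0 um) :=
    continuousOn_const.sub fun s hs => (hderiv s hs).continuousWithinAt
  have hchord (s) (hs : s ∈ Icc 0 um) : κ - f um + f um / um * (um - s) ≤ κ - f s := by
    have hsec := hconv.le_secant hum hs
    simp only [hf0, sub_zero, zero_add] at hsec
    rw [mul_sub, div_mul_cancel₀ _ hum.ne']
    linarith
  have htangent (s) (hs : s ∈ Icc 0 um) : κ - f s ≤ κ - f um + f' um * (um - s) := by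
    have := hconv.add_deriv_mul_sub_le hum_mem hs (hderiv um hum_mem)
    linarith
  have hsq (s) : (f s - κ) ^ 2 = (κ - f s) ^ 2 := by ring
  simp_rw [hsq] at himp
  have hupper := integral_sqrt_sq_sub_sq_div_le hd hε.le hK (div_pos hF hum) hum.le hchord
  have hlower := le_integral_sqrt_sq_sub_sq_div hd hK hf'um hum.le
    (fun s hs => ⟨(hband s hs).1, (hband s hs).2.le⟩) htangent
  have hpos := integral_sqrt_sq_sub_sq_div_pos hd hum hband
  rw [← himp] at hupper hlower hpos
  constructor
  · refine div_exp_sub_one_le_of_log_le (mul_pos hum hf'um) hK ?_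
    rw [le_div_iff₀ hε, mul_comm um]
    calc log (1 + f' um * um / (κ - f um)) * ε
        = f' um * (ε * (f' um)⁻¹ * log (1 + f' um * um / (κ - f um))) := by field_simp
      _ ≤ f' um * (ξ + ℓ + um) := by gcongr; linarith
  · refine le_div_exp_sub_one_of_le_log hF.le hK (by positivity) ?_
    rw [div_mul_cancel₀ _ hum.ne'] at hupper
    rw [div_le_iff₀ (by positivity)]
    calc f um * (ξ + ℓ) ≤ f um * (ε * (f um / um)⁻¹ * log (1 + f um / (κ - f um))) := by gcongr
      _ = log (1 + f um / (κ - f um)) * (ε * um) := by field_simp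

/-- two-sided exponential estimate for the integration constant
`κ = κ₋(ξ)` of the left half of the approximate steady state, where
`F = f(u₋) > 0`, `u₋ > 0`, `f` convex and C¹ on `[0, u₋]` with `f(0) = 0`,
`f'(u₋) > 0`, and `ξ + ℓ = ∫_0^{u₋} √(ε² − (f(s)−κ)²)/(κ − f(s)) ds`. -/
theorem kappa_minus_bounds
    (ε ℓ ξ um : ℝ) (hε : 0 < ε) (hℓ : 0 < ℓ) (hum : 0 < um)
    (f f' : ℝ → ℝ)
    (hconv : ConvexOn ℝ (Set.Icc 0 um) f)
    (hderiv : ∀ s ∈ Set.Icc 0 um, HasDerivWithinAt f (f' s) (Set.Icc 0 um) s)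
    (hf'cont : ContinuousOn f' (Set.Icc 0 um))
    (hf0 : f 0 = 0) (hF : 0 < f um) (hf'um : 0 < f' um)
    (κ : ℝ) (hκ : κ ∈ Set.Ioo (f um) ε)
    (hband : ∀ s ∈ Set.Icc 0 um, 0 < κ - f s ∧ κ - f s < ε)
    (himp : ξ + ℓ = ∫ s in (0:ℝ)..um, Real.sqrt (ε ^ 2 - (f s - κ) ^ 2) / (κ - f s)) :
    um * f' um / (Real.exp (f' um * (ξ + ℓ + um) / ε) - 1) ≤ κ - f um ∧
    κ - f um ≤ f um / (Real.exp (f um * (ξ + ℓ) / (ε * um)) - 1) :=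
  kappa_minus_bounds_general ε ℓ ξ um hum f f' hconv hderiv hf0 hF hf'um κ hband himp
end

section
/- Let ε > 0, ℓ > 0, x₀ ∈ [−ℓ,ℓ], and let U : [−ℓ,ℓ] → ℝ be twice continuously differentiable. Define ρ(x) = exp( −(1/ε) ∫_{x₀}^{x} U(y)(1 + U'(y)²)^{3/2} dy ), p(x) = ε/(1 + U'(x)²)^{3/2}, q(x) = −3ε U''(x) U'(x)/(1 + U'(x)²)^{5/2} − U(x), and r(x) = −U'(x). Then the function v := 1/ρ satisfies p(x) v''(x) + q(x) v'(x) + r(x) v(x) = 0 for every x ∈ [−ℓ,ℓ]. -/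
/-!
Write `1/ρ = exp G` with `G' = h := U (1 + U'²)^{3/2} / ε`. Then `(1/ρ)' = h/ρ` and
`(1/ρ)'' = (h' + h²)/ρ`, so `L (1/ρ) = (p (h' + h²) + q h + r)/ρ`, and this Riccati expression
vanishes identically: once `(1 + U'²)^{1/2}` and `(1 + U'²)^{5/2}` are expressed through
`(1 + U'²)^{3/2}` it is a rational identity in `ε, U, U', U''`.
-/

open Real Set

theorem hasDerivWithinAt_integral_Icc {g : ℝ → ℝ} {a b x₀ x : ℝ}
    (hg : ContinuousOn g (Icc a b)) (hx₀ : x₀ ∈ Icc a b) (hx : x ∈ Icc a b) :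
    HasDerivWithinAt (fun t => ∫ y in x₀..t, g y) (g x) (Icc a b) x := by
  have : Fact (x ∈ Icc a b) := ⟨hx⟩
  exact intervalIntegral.integral_hasDerivWithinAt_right
    ((hg.mono (uIcc_subset_Icc hx₀ hx)).intervalIntegrable)
    ⟨Icc a b, self_mem_nhdsWithin, hg.aestronglyMeasurable measurableSet_Icc⟩ (hg x hx)

theorem HasDerivWithinAt.one_add_sq_rpow_three_halves {f : ℝ → ℝ} {f' x : ℝ} {s : Set ℝ}
    (hf : HasDerivWithinAt f f' s x) :
    HasDerivWithinAt (fun y => (1 + f y ^ 2) ^ ((3 : ℝ) / 2))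
      (3 * f x * f' * (1 + f x ^ 2) ^ ((3 : ℝ) / 2) / (1 + f x ^ 2)) s x := by
  have hA : (1 + f x ^ 2) ≠ 0 := by positivity
  convert ((hf.fun_pow 2).const_add 1).rpow_const (p := (3 : ℝ) / 2) (Or.inl hA) using 1
  rw [rpow_sub_one hA]
  push_cast
  ring

/-- The second derivative of `exp ∘ G` when `G' = h` and `h' = k`. -/
theorem HasDerivWithinAt.mul_exp {G h : ℝ → ℝ} {k x : ℝ} {s : Set ℝ}
    (hh : HasDerivWithinAt h k s x) (hG : HasDerivWithinAt G (h x) s x) :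
    HasDerivWithinAt (fun y => h y * Real.exp (G y)) ((k + h x ^ 2) * Real.exp (G x)) s x :=
  (hh.mul hG.exp).congr_deriv (by ring)

/-- `p (h' + h²) + q h + r` at a point, with `c` standing for `A^{3/2}` where `A = 1 + u'²`,
so that `A^{5/2} = A c`. -/
theorem riccati_identity {ε A c u u' u'' : ℝ} (hε : ε ≠ 0) (hA : A ≠ 0) (hc : c ≠ 0) :
    ε / c * ((u' * c + u * (3 * u' * u'' * c / A)) / ε + (u * c / ε) ^ 2)
      + (-(3 * ε) * u'' * u' / (A * c) - u) * (u * c / ε) + -u' = 0 := by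
  field_simp
  ring

theorem inv_weight_in_kernel_general
    (ε ℓ x₀ : ℝ) (hε : 0 < ε) (hx₀ : x₀ ∈ Set.Icc (-ℓ) ℓ)
    (U U' U'' : ℝ → ℝ)
    (hU : ∀ x ∈ Set.Icc (-ℓ) ℓ, HasDerivWithinAt U (U' x) (Set.Icc (-ℓ) ℓ) x)
    (hU' : ∀ x ∈ Set.Icc (-ℓ) ℓ, HasDerivWithinAt U' (U'' x) (Set.Icc (-ℓ) ℓ) x)
    (ρ p q r : ℝ → ℝ)
    (hρ : ∀ x, ρ x = Real.exp (-(1/ε) *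
      ∫ y in x₀..x, U y * (1 + (U' y) ^ 2) ^ ((3:ℝ)/2)))
    (hp : ∀ x, p x = ε / (1 + (U' x) ^ 2) ^ ((3:ℝ)/2))
    (hq : ∀ x, q x = -(3 * ε) * U'' x * U' x / (1 + (U' x) ^ 2) ^ ((5:ℝ)/2) - U x)
    (hr : ∀ x, r x = -U' x) :
    ∃ w' w'' : ℝ → ℝ,
      (∀ x ∈ Set.Icc (-ℓ) ℓ,
        HasDerivWithinAt (fun y => (ρ y)⁻¹) (w' x) (Set.Icc (-ℓ) ℓ) x) ∧
      (∀ x ∈ Set.Icc (-ℓ) ℓ, HasDerivWithinAt w' (w'' x) (Set.Icc (-ℓ) ℓ) x) ∧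
      (∀ x ∈ Set.Icc (-ℓ) ℓ,
        p x * w'' x + q x * w' x + r x * (ρ x)⁻¹ = 0) := by
  set A : ℝ → ℝ := fun x => 1 + U' x ^ 2
  set G : ℝ → ℝ := fun x => (∫ y in x₀..x, U y * A y ^ ((3 : ℝ) / 2)) / ε
  set h : ℝ → ℝ := fun x => U x * A x ^ ((3 : ℝ) / 2) / ε
  set k : ℝ → ℝ := fun x =>
    (U' x * A x ^ ((3 : ℝ) / 2) + U x * (3 * U' x * U'' x * A x ^ ((3 : ℝ) / 2) / A x)) / ε
  have hv : ∀ x, (ρ x)⁻¹ = exp (G x) := fun x => by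
    rw [hρ, ← exp_neg]; congr 1; ring
  have hG : ∀ x ∈ Icc (-ℓ) ℓ, HasDerivWithinAt G (h x) (Icc (-ℓ) ℓ) x := fun x hx =>
    (hasDerivWithinAt_integral_Icc (ContinuousOn.mul (fun y hy => (hU y hy).continuousWithinAt)
      (fun y hy => ((hU' y hy).one_add_sq_rpow_three_halves).continuousWithinAt)) hx₀ hx).div_const ε
  have hh : ∀ x ∈ Icc (-ℓ) ℓ, HasDerivWithinAt h (k x) (Icc (-ℓ) ℓ) x := fun x hx =>
    ((hU x hx).mul (hU' x hx).one_add_sq_rpow_three_halves).div_const ε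
  refine ⟨fun x => h x * exp (G x), fun x => (k x + h x ^ 2) * exp (G x),
    fun x hx => (hG x hx).exp.congr (fun y _ => hv y) (hv x) |>.congr_deriv (mul_comm _ _),
    fun x hx => (hh x hx).mul_exp (hG x hx), fun x _ => ?_⟩
  have hA : A x ≠ 0 := by positivity
  have h52 : A x ^ ((5 : ℝ) / 2) = A x * A x ^ ((3 : ℝ) / 2) := by
    rw [show (5 : ℝ) / 2 = 1 + 3 / 2 by norm_num, rpow_add (by positivity), rpow_one]
  rw [hv, hp, hq, hr]
  have key := riccati_identity (u := U x) (u' := U' x) (u'' := U'' x) hε.ne' hA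
    (rpow_pos_of_pos (by positivity : 0 < A x) ((3 : ℝ) / 2)).ne'
  simp only [A, h52] at key ⊢
  linear_combination exp (G x) * key

/-- the function `v := 1/ρ`, with
`ρ(x) = exp(−(1/ε) ∫_{x₀}^x U (1+(U')²)^{3/2})`, satisfies the linearized equation
`p v'' + q v' + r v = 0` on `[−ℓ,ℓ]`. -/
theorem inv_weight_in_kernel
    (ε ℓ x₀ : ℝ) (hε : 0 < ε) (hℓ : 0 < ℓ) (hx₀ : x₀ ∈ Set.Icc (-ℓ) ℓ)
    (U U' U'' : ℝ → ℝ)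
    (hU : ∀ x ∈ Set.Icc (-ℓ) ℓ, HasDerivWithinAt U (U' x) (Set.Icc (-ℓ) ℓ) x)
    (hU' : ∀ x ∈ Set.Icc (-ℓ) ℓ, HasDerivWithinAt U' (U'' x) (Set.Icc (-ℓ) ℓ) x)
    (hU''c : ContinuousOn U'' (Set.Icc (-ℓ) ℓ))
    (ρ p q r : ℝ → ℝ)
    (hρ : ∀ x, ρ x = Real.exp (-(1/ε) *
      ∫ y in x₀..x, U y * (1 + (U' y) ^ 2) ^ ((3:ℝ)/2)))
    (hp : ∀ x, p x = ε / (1 + (U' x) ^ 2) ^ ((3:ℝ)/2))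
    (hq : ∀ x, q x = -(3 * ε) * U'' x * U' x / (1 + (U' x) ^ 2) ^ ((5:ℝ)/2) - U x)
    (hr : ∀ x, r x = -U' x) :
    ∃ w' w'' : ℝ → ℝ,
      (∀ x ∈ Set.Icc (-ℓ) ℓ,
        HasDerivWithinAt (fun y => (ρ y)⁻¹) (w' x) (Set.Icc (-ℓ) ℓ) x) ∧
      (∀ x ∈ Set.Icc (-ℓ) ℓ, HasDerivWithinAt w' (w'' x) (Set.Icc (-ℓ) ℓ) x) ∧
      (∀ x ∈ Set.Icc (-ℓ) ℓ,
        p x * w'' x + q x * w' x + r x * (ρ x)⁻¹ = 0) :=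
  inv_weight_in_kernel_general ε ℓ x₀ hε hx₀ U U' U'' hU hU' ρ p q r hρ hp hq hr
end

section
/- Let ℓ > 0, let p : [−ℓ,ℓ] → ℝ be continuously differentiable with p(x) > 0 for every x ∈ [−ℓ,ℓ], let U : [−ℓ,ℓ] → ℝ be continuously differentiable, and let λ ∈ ℝ. Suppose φ : [−ℓ,ℓ] → ℝ is twice continuously differentiable with φ(−ℓ) = φ(ℓ) = 0, φ(x) > 0 for every x ∈ (−ℓ,ℓ), φ'(ℓ) < 0, φ'(−ℓ) > 0, and p(x) φ''(x) + p'(x) φ'(x) − (U φ)'(x) = λ φ(x) for every x ∈ [−ℓ,ℓ]. Then λ ∫_{−ℓ}^{ℓ} φ(x) dx = p(ℓ) φ'(ℓ) − p(−ℓ) φ'(−ℓ), and consequently λ < 0. -/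
/-!
The equation says exactly that the flux `p φ' − U φ` is an antiderivative of `λ φ`. Integrating
over `[−ℓ, ℓ]` and using `φ(±ℓ) = 0` gives `λ ∫ φ = p(ℓ) φ'(ℓ) − p(−ℓ) φ'(−ℓ)`. The right-hand
side is negative since `p > 0`, `φ'(ℓ) < 0 < φ'(−ℓ)`, while `∫ φ > 0`; hence `λ < 0`.
-/

open Set

section Flux

variable {a b lam : ℝ} {p p' U U' φ φ' φ'' : ℝ → ℝ}

theorem hasDerivWithinAt_flux {x : ℝ}
    (hp : HasDerivWithinAt p (p' x) (Icc a b) x)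
    (hU : HasDerivWithinAt U (U' x) (Icc a b) x)
    (hφ : HasDerivWithinAt φ (φ' x) (Icc a b) x)
    (hφ' : HasDerivWithinAt φ' (φ'' x) (Icc a b) x)
    (heq : p x * φ'' x + p' x * φ' x - (U' x * φ x + U x * φ' x) = lam * φ x) :
    HasDerivWithinAt (fun y => p y * φ' y - U y * φ y) (lam * φ x) (Icc a b) x := by
  exact ((hp.mul hφ').sub (hU.mul hφ)).congr_deriv (by linarith)

theorem mul_integral_eq_flux_sub_flux (hab : a ≤ b)
    (hp : ∀ x ∈ Icc a b, HasDerivWithinAt p (p' x) (Icc a b) x)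
    (hU : ∀ x ∈ Icc a b, HasDerivWithinAt U (U' x) (Icc a b) x)
    (hφ : ∀ x ∈ Icc a b, HasDerivWithinAt φ (φ' x) (Icc a b) x)
    (hφ' : ∀ x ∈ Icc a b, HasDerivWithinAt φ' (φ'' x) (Icc a b) x)
    (heq : ∀ x ∈ Icc a b,
      p x * φ'' x + p' x * φ' x - (U' x * φ x + U x * φ' x) = lam * φ x) :
    lam * ∫ x in a..b, φ x = (p b * φ' b - U b * φ b) - (p a * φ' a - U a * φ a) := by
  have hflux x (hx : x ∈ Icc a b) := hasDerivWithinAt_flux (hp x hx) (hU x hx) (hφ x hx)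
    (hφ' x hx) (heq x hx)
  have hφc : ContinuousOn φ (Icc a b) := fun x hx => (hφ x hx).continuousWithinAt
  rw [← intervalIntegral.integral_const_mul]
  refine intervalIntegral.integral_eq_sub_of_hasDerivAt_of_le hab
    (fun x hx => (hflux x hx).continuousWithinAt)
    (fun x hx => (hflux x (Ioo_subset_Icc_self hx)).hasDerivAt (Icc_mem_nhds hx.1 hx.2)) ?_
  exact (continuousOn_const.mul hφc).intervalIntegrable_of_Icc hab

end Flux

theorem first_eigenvalue_neg_general
    (ℓ lam : ℝ) (hℓ : 0 < ℓ)
    (p p' U U' φ φ' φ'' : ℝ → ℝ)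
    (hp : ∀ x ∈ Set.Icc (-ℓ) ℓ, HasDerivWithinAt p (p' x) (Set.Icc (-ℓ) ℓ) x)
    (hppos : ∀ x ∈ Set.Icc (-ℓ) ℓ, 0 < p x)
    (hU : ∀ x ∈ Set.Icc (-ℓ) ℓ, HasDerivWithinAt U (U' x) (Set.Icc (-ℓ) ℓ) x)
    (hφ : ∀ x ∈ Set.Icc (-ℓ) ℓ, HasDerivWithinAt φ (φ' x) (Set.Icc (-ℓ) ℓ) x)
    (hφ' : ∀ x ∈ Set.Icc (-ℓ) ℓ, HasDerivWithinAt φ' (φ'' x) (Set.Icc (-ℓ) ℓ) x)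
    (hbd : φ (-ℓ) = 0 ∧ φ ℓ = 0)
    (hpos : ∀ x ∈ Set.Ioo (-ℓ) ℓ, 0 < φ x)
    (hslope : φ' ℓ < 0 ∧ 0 < φ' (-ℓ))
    (heq : ∀ x ∈ Set.Icc (-ℓ) ℓ,
      p x * φ'' x + p' x * φ' x - (U' x * φ x + U x * φ' x) = lam * φ x) :
    lam * (∫ x in (-ℓ)..ℓ, φ x) = p ℓ * φ' ℓ - p (-ℓ) * φ' (-ℓ) ∧ lam < 0 := by
  have hlt : -ℓ < ℓ := by linarith
  have hidentity : lam * (∫ x in (-ℓ)..ℓ, φ x) = p ℓ * φ' ℓ - p (-ℓ) * φ' (-ℓ) := by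
    rw [mul_integral_eq_flux_sub_flux hlt.le hp hU hφ hφ' heq, hbd.1, hbd.2]
    ring
  have hintegral_pos : 0 < ∫ x in (-ℓ)..ℓ, φ x :=
    intervalIntegral.intervalIntegral_pos_of_pos_on
      (ContinuousOn.intervalIntegrable_of_Icc hlt.le fun x hx => (hφ x hx).continuousWithinAt)
      hpos hlt
  have hboundary_neg : p ℓ * φ' ℓ - p (-ℓ) * φ' (-ℓ) < 0 := by
    have hpr := hppos ℓ (right_mem_Icc.2 hlt.le)
    have hpl := hppos (-ℓ) (left_mem_Icc.2 hlt.le)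
    nlinarith [mul_neg_of_pos_of_neg hpr hslope.1, mul_pos hpl hslope.2]
  exact ⟨hidentity, neg_of_mul_neg_left (hidentity ▸ hboundary_neg) hintegral_pos.le⟩

/-- if `φ > 0` on `(−ℓ,ℓ)` vanishes at `±ℓ`, has `φ'(ℓ) < 0 < φ'(−ℓ)`,
and solves `p φ'' + p' φ' − (U φ)' = λ φ` on `[−ℓ,ℓ]` with `p > 0`, then
`λ ∫ φ = p(ℓ) φ'(ℓ) − p(−ℓ) φ'(−ℓ)` and consequently `λ < 0`. -/
theorem first_eigenvalue_neg
    (ℓ lam : ℝ) (hℓ : 0 < ℓ)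
    (p p' U U' φ φ' φ'' : ℝ → ℝ)
    (hp : ∀ x ∈ Set.Icc (-ℓ) ℓ, HasDerivWithinAt p (p' x) (Set.Icc (-ℓ) ℓ) x)
    (hp'c : ContinuousOn p' (Set.Icc (-ℓ) ℓ))
    (hppos : ∀ x ∈ Set.Icc (-ℓ) ℓ, 0 < p x)
    (hU : ∀ x ∈ Set.Icc (-ℓ) ℓ, HasDerivWithinAt U (U' x) (Set.Icc (-ℓ) ℓ) x)
    (hU'c : ContinuousOn U' (Set.Icc (-ℓ) ℓ))
    (hφ : ∀ x ∈ Set.Icc (-ℓ) ℓ, HasDerivWithinAt φ (φ' x) (Set.Icc (-ℓ) ℓ) x)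
    (hφ' : ∀ x ∈ Set.Icc (-ℓ) ℓ, HasDerivWithinAt φ' (φ'' x) (Set.Icc (-ℓ) ℓ) x)
    (hφ''c : ContinuousOn φ'' (Set.Icc (-ℓ) ℓ))
    (hbd : φ (-ℓ) = 0 ∧ φ ℓ = 0)
    (hpos : ∀ x ∈ Set.Ioo (-ℓ) ℓ, 0 < φ x)
    (hslope : φ' ℓ < 0 ∧ 0 < φ' (-ℓ))
    (heq : ∀ x ∈ Set.Icc (-ℓ) ℓ,
      p x * φ'' x + p' x * φ' x - (U' x * φ x + U x * φ' x) = lam * φ x) :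
    lam * (∫ x in (-ℓ)..ℓ, φ x) = p ℓ * φ' ℓ - p (-ℓ) * φ' (-ℓ) ∧ lam < 0 :=
  first_eigenvalue_neg_general ℓ lam hℓ p p' U U' φ φ' φ'' hp hppos hU hφ hφ' hbd hpos hslope heq
end
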